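/- arXiv:2109.15001 — 12 statements merged into one kernel-verified Lean document; each statement's English description precedes it below -/
import Mathlib

section
/- Let X be a normed space, n a natural number, and x_1,...,x_n elements of X with ‖x_1 + ... + x_n‖ = ‖x_1‖ + ... + ‖x_n‖. Then for all nonnegative real numbers t_1,...,t_n, ‖t_1 x_1 + ... + t_n x_n‖ = t_1‖x_1‖ + ... + t_n‖x_n‖. -/
theorem stmt_0 {X : Type*} [NormedAddCommGroup X] [NormedSpace ℝ X]
    (n : ℕ) (x : Fin n → X)
    (h : ‖∑ i, x i‖ = ∑ i, ‖x i‖)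
    (t : Fin n → ℝ) (ht : ∀ i, 0 ≤ t i) :
    ‖∑ i, t i • x i‖ = ∑ i, t i * ‖x i‖ := by
  set M : ℝ := ∑ i, t i with hM
  have hM0 : 0 ≤ M := Finset.sum_nonneg fun i _ => ht i
  have htM : ∀ i, t i ≤ M := fun i =>
    Finset.single_le_sum (fun j _ => ht j) (Finset.mem_univ i)
  have le1 : ‖∑ i, t i • x i‖ ≤ ∑ i, t i * ‖x i‖ := by
    calc ‖∑ i, t i • x i‖ ≤ ∑ i, ‖t i • x i‖ := norm_sum_le _ _
    _ = ∑ i, t i * ‖x i‖ := by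
        refine Finset.sum_congr rfl fun i _ => ?_
        rw [norm_smul, Real.norm_of_nonneg (ht i)]
  have split : M • ∑ i, x i = (∑ i, t i • x i) + ∑ i, (M - t i) • x i := by
    rw [← Finset.sum_add_distrib, Finset.smul_sum]
    refine Finset.sum_congr rfl fun i _ => ?_
    rw [← add_smul]
    ring_nf
  have le2 : ∑ i, t i * ‖x i‖ ≤ ‖∑ i, t i • x i‖ := by
    have h1 : ‖M • ∑ i, x i‖ = M * ∑ i, ‖x i‖ := by
      rw [norm_smul, Real.norm_of_nonneg hM0, h]
    have h2 : ‖∑ i, (M - t i) • x i‖ ≤ ∑ i, (M - t i) * ‖x i‖ := by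
      calc ‖∑ i, (M - t i) • x i‖ ≤ ∑ i, ‖(M - t i) • x i‖ := norm_sum_le _ _
      _ = ∑ i, (M - t i) * ‖x i‖ := by
          refine Finset.sum_congr rfl fun i _ => ?_
          rw [norm_smul, Real.norm_of_nonneg (sub_nonneg.2 (htM i))]
    have h3 : M * ∑ i, ‖x i‖ ≤ ‖∑ i, t i • x i‖ + ∑ i, (M - t i) * ‖x i‖ := by
      calc M * ∑ i, ‖x i‖ = ‖M • ∑ i, x i‖ := h1.symm
      _ = ‖(∑ i, t i • x i) + ∑ i, (M - t i) • x i‖ := by rw [split]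
      _ ≤ ‖∑ i, t i • x i‖ + ‖∑ i, (M - t i) • x i‖ := norm_add_le _ _
      _ ≤ ‖∑ i, t i • x i‖ + ∑ i, (M - t i) * ‖x i‖ := by linarith
    have h4 : M * ∑ i, ‖x i‖ - ∑ i, (M - t i) * ‖x i‖ = ∑ i, t i * ‖x i‖ := by
      rw [Finset.mul_sum, ← Finset.sum_sub_distrib]
      refine Finset.sum_congr rfl fun i _ => ?_
      ring
    linarith
  linarith
end

section
/- Let X be a normed space, n a natural number, and x_1,...,x_n elements of X with ‖x_1 + ... + x_n‖ = ‖x_1‖ + ... + ‖x_n‖. Then for all real numbers t_1,...,t_n, ‖t_1 x_1 + ... + t_n x_n‖ ≥ t_1‖x_1‖ + ... + t_n‖x_n‖. -/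
theorem stmt_1 {X : Type*} [NormedAddCommGroup X] [NormedSpace ℝ X]
    (n : ℕ) (x : Fin n → X)
    (h : ‖∑ i, x i‖ = ∑ i, ‖x i‖)
    (t : Fin n → ℝ) :
    ‖∑ i, t i • x i‖ ≥ ∑ i, t i * ‖x i‖ := by
  set M : ℝ := ∑ i, |t i| with hM
  have hM0 : 0 ≤ M := Finset.sum_nonneg fun i _ => abs_nonneg _
  have hMt : ∀ i, t i ≤ M := fun i =>
    le_trans (le_abs_self _) (Finset.single_le_sum (f := fun i => |t i|)
      (fun i _ => abs_nonneg _) (Finset.mem_univ i))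
  have key : ‖M • ∑ i, x i - ∑ i, t i • x i‖ ≤ ∑ i, (M - t i) * ‖x i‖ := by
    have : M • ∑ i, x i - ∑ i, t i • x i = ∑ i, (M - t i) • x i := by
      rw [Finset.smul_sum, ← Finset.sum_sub_distrib]
      congr 1; ext i; rw [sub_smul]
    rw [this]
    refine le_trans (norm_sum_le _ _) (le_of_eq ?_)
    refine Finset.sum_congr rfl fun i _ => ?_
    rw [norm_smul, Real.norm_eq_abs, abs_of_nonneg (sub_nonneg.mpr (hMt i))]
  have h1 : ‖M • ∑ i, x i‖ - ‖M • ∑ i, x i - ∑ i, t i • x i‖ ≤ ‖∑ i, t i • x i‖ := by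
    have := norm_sub_norm_le (M • ∑ i, x i) (∑ i, t i • x i)
    linarith [this, abs_le.mp (le_refl |‖M • ∑ i, x i‖ - ‖∑ i, t i • x i‖|)]
  have h2 : ‖M • ∑ i, x i‖ = M * ∑ i, ‖x i‖ := by
    rw [norm_smul, Real.norm_eq_abs, abs_of_nonneg hM0, h]
  have h3 : ∑ i, (M - t i) * ‖x i‖ = M * ∑ i, ‖x i‖ - ∑ i, t i * ‖x i‖ := by
    rw [Finset.mul_sum, ← Finset.sum_sub_distrib]
    congr 1; ext i; ring
  linarith [key, h1]
end

section
/- Let X be a real normed space and suppose that for every finite set of slices S_1,...,S_n of B_X and every λ ∈ (0,1) there exist points x_i ∈ S_i and a norm-one functional x* with x*(x_i) ≥ λ for all i. Then every convex series ∑_{i=1}^∞ λ_i S_i of slices of B_X (with λ_i ≥ 0 summing to 1) intersects B_X \ λB_X for every λ ∈ (0,1); that is, for every λ ∈ (0,1) there exist x_i ∈ S_i with ‖∑_{i=1}^∞ λ_i x_i‖ > λ. -/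
/-!
Pick `t ∈ (μ, 1)` and `N` with `(1 + t) ∑_{i<N} λ_i > 1 + μ`. The hypothesis applied to the
first `N` slices gives points `x_i` and a norm-one `g` with `g x_i ≥ t`; since `g ≥ -1` on the
ball, any choice of the remaining points gives `‖z‖ ≥ g z ≥ (1 + t) ∑_{i<N} λ_i - 1 > μ`.
As `X` need not be complete, the remaining points are chosen in small balls inside the slices
and perturbed, through the completion of `X`, so that the series converges in `X` itself.
-/

open Finset UniformSpace Metric

/-- The ballSlice of the closed unit ball determined by a norm-one functional `f`
and `ε ∈ (0,1)`. -/
def ballSlice {X : Type*} [NormedAddCommGroup X] [NormedSpace ℝ X]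
    (f : X →L[ℝ] ℝ) (ε : ℝ) : Set X :=
  {x | ‖x‖ ≤ 1 ∧ 1 - ε ≤ f x}

section

variable {X : Type*} [NormedAddCommGroup X]

theorem exists_summable_add_of_summable_norm_nat {a : ℕ → X} (ha : Summable fun n => ‖a n‖)
    {ρ : ℕ → ℝ} (hρ : ∀ n, 0 < ρ n) (hρs : Summable ρ) :
    ∃ c : ℕ → X, (∀ n, ‖c n‖ ≤ ρ n) ∧ Summable fun n => a n + c n := by
  obtain ⟨A, hA⟩ : ∃ A, HasSum (fun n => (a n : Completion X)) A :=
    Summable.of_norm (by simpa only [Completion.norm_coe] using ha)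
  obtain ⟨z, hz⟩ : ∃ z : X, dist A z < ρ 0 / 2 :=
    Completion.denseRange_coe.exists_dist_lt A (half_pos (hρ 0))
  -- Write `z - A` as a series of elements of `X` with small terms; adding it to `∑ a n`
  -- moves the sum from `A` to `z ∈ X`.
  have hmem : (z : Completion X) - A ∈
      closure ((Completion.toCompl (α := X)).range : Set (Completion X)) :=
    Completion.denseRange_coe _
  obtain ⟨v, hv_lim, hv_mem, hv0, hv⟩ :=
    controlled_sum_of_mem_closure hmem (b := fun n => ρ n / 2) fun n => half_pos (hρ n)
  choose c hc using hv_mem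
  simp only [Completion.toCompl_apply] at hc
  have hcρ : ∀ n, ‖c n‖ ≤ ρ n := by
    intro n
    rw [← Completion.norm_coe, hc]
    rcases n.eq_zero_or_pos with rfl | hn
    · have : ‖(z : Completion X) - A‖ < ρ 0 / 2 := by rwa [← dist_eq_norm, dist_comm]
      calc ‖v 0‖ = ‖-(-v 0 + ((z : Completion X) - A)) + ((z : Completion X) - A)‖ := by
            abel_nf
        _ ≤ _ := norm_add_le _ _
        _ ≤ ρ 0 := by rw [norm_neg]; linarith
    · linarith [hv n hn, hρ n]
  have hv_sum : HasSum v ((z : Completion X) - A) := by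
    have hsv : Summable v :=
      Summable.of_norm_bounded hρs fun n => by rw [← hc, Completion.norm_coe]; exact hcρ n
    have hsv_lim := (Filter.tendsto_add_atTop_iff_nat 1).2 hsv.hasSum.tendsto_sum_nat
    exact tendsto_nhds_unique hsv_lim hv_lim ▸ hsv.hasSum
  refine ⟨c, hcρ, z, ?_⟩
  rw [← (Completion.isUniformEmbedding_coe X).isInducing.hasSum_iff (g := Completion.toCompl)]
  convert hA.add hv_sum using 1
  · ext n
    simp [← hc, Completion.coe_add]
  · simp

theorem exists_summable_add_of_summable_norm {ι : Type*} [Countable ι] {a : ι → X}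
    (ha : Summable fun i => ‖a i‖) {ρ : ι → ℝ} (hρ : ∀ i, 0 < ρ i) (hρs : Summable ρ) :
    ∃ c : ι → X, (∀ i, ‖c i‖ ≤ ρ i) ∧ Summable fun i => a i + c i := by
  rcases finite_or_infinite ι with hι | hι
  · exact ⟨0, fun i => by simpa using (hρ i).le, .of_finite⟩
  obtain ⟨e⟩ := nonempty_equiv_of_countable (α := ℕ) (β := ι)
  obtain ⟨c, hcρ, hc⟩ := exists_summable_add_of_summable_norm_nat
    ((e.summable_iff (f := fun i => ‖a i‖)).2 ha) (fun n => hρ (e n)) (e.summable_iff.2 hρs)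
  refine ⟨c ∘ e.symm, fun i => by simpa using hcρ (e.symm i), ?_⟩
  rw [← e.summable_iff]
  simpa [Function.comp_def] using hc

variable [NormedSpace ℝ X]

theorem exists_mem_closedBall_summable_smul {ι : Type*} [Countable ι] {lam : ι → ℝ}
    (hlam : ∀ i, 0 ≤ lam i) {u : ι → X} (hu : Summable fun i => lam i * ‖u i‖)
    {r : ι → ℝ} (hr : ∀ i, 0 < r i) (hr_sum : Summable fun i => lam i * r i) :
    ∃ y : ι → X, (∀ i, y i ∈ closedBall (u i) (r i)) ∧ Summable fun i => lam i • y i := by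
  -- The perturbation of `lam i • u i` must vanish when `lam i = 0`, so it is built on the
  -- support of `lam`, where the admissible radii `lam i * r i` are positive.
  let s : Set ι := {i | lam i ≠ 0}
  have hpos : ∀ i : s, 0 < lam i := fun i => (hlam i).lt_of_ne' i.2
  obtain ⟨c, hcρ, hc⟩ := exists_summable_add_of_summable_norm (a := fun i : s => lam i • u i)
    ((hu.subtype s).congr fun i => by simp [norm_smul, abs_of_nonneg (hlam i.1)])
    (fun i => mul_pos (hpos i) (hr i)) (hr_sum.subtype s)
  classical
  refine ⟨fun i => if h : lam i = 0 then u i else u i + (lam i)⁻¹ • c ⟨i, h⟩, fun i => ?_, ?_⟩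
  · by_cases h : lam i = 0
    · simp [h, (hr i).le]
    · have hi := hpos ⟨i, h⟩
      rw [mem_closedBall, dist_eq_norm]
      simp only [h, dite_false, add_sub_cancel_left, norm_smul, norm_inv,
        Real.norm_of_nonneg hi.le]
      rw [inv_mul_le_iff₀ hi]
      exact hcρ ⟨i, h⟩
  · obtain ⟨z, hz⟩ := hc
    refine ⟨z, (hasSum_subtype_iff_of_support_subset (s := s) fun i hi => ?_).1 ?_⟩
    · contrapose! hi
      simp [show lam i = 0 by simpa [s] using hi]
    · convert hz using 1
      ext ⟨i, hi⟩
      have hi : lam i ≠ 0 := hi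
      simp [hi, smul_add, smul_smul]

theorem exists_closedBall_subset_ballSlice {f : X →L[ℝ] ℝ} (hf : ‖f‖ = 1) {ε : ℝ}
    (hε0 : 0 < ε) (hε1 : ε ≤ 1) : ∃ u, closedBall u (ε / 4) ⊆ ballSlice f ε := by
  obtain ⟨b, hb, hfb⟩ : ∃ b, ‖b‖ ≤ 1 ∧ 1 - ε / 2 < f b := by
    obtain ⟨b, hb, hfb⟩ := f.exists_lt_apply_of_lt_opNorm (r := 1 - ε / 2) (by linarith)
    rcases lt_abs.1 hfb with h | h
    · exact ⟨b, hb.le, h⟩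
    · exact ⟨-b, by simpa using hb.le, by simpa using h⟩
  refine ⟨(1 - ε / 4) • b, fun x hx => ?_⟩
  rw [mem_closedBall, dist_eq_norm] at hx
  set u := (1 - ε / 4) • b
  have hu : ‖u‖ ≤ 1 - ε / 4 := by
    rw [norm_smul, Real.norm_of_nonneg (by linarith)]
    exact mul_le_of_le_one_right (by linarith) hb
  have hfxu : -(ε / 4) ≤ f (x - u) := by
    refine neg_le_of_abs_le ((f.le_opNorm _).trans ?_)
    rwa [hf, one_mul]
  refine ⟨?_, ?_⟩
  · calc ‖x‖ = ‖(x - u) + u‖ := by rw [sub_add_cancel]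
      _ ≤ ‖x - u‖ + ‖u‖ := norm_add_le _ _
      _ ≤ 1 := by linarith
  · have hfx : f x = f (x - u) + (1 - ε / 4) * f b := by simp [u]
    nlinarith

theorem one_add_mul_sum_sub_one_le_norm {ι : Type*} {g : X →L[ℝ] ℝ} (hg : ‖g‖ ≤ 1)
    {lam : ι → ℝ} (hlam : ∀ i, 0 ≤ lam i) (hsum : HasSum lam 1) {x : ι → X}
    (hx : ∀ i, ‖x i‖ ≤ 1) {z : X} (hz : HasSum (fun i => lam i • x i) z) (F : Finset ι)
    {t : ℝ} (ht : ∀ i ∈ F, t ≤ g (x i)) : (1 + t) * ∑ i ∈ F, lam i - 1 ≤ ‖z‖ := by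
  have hgx : ∀ i, -1 ≤ g (x i) := fun i =>
    neg_le_of_abs_le <| (g.le_opNorm _).trans <| mul_le_one₀ hg (norm_nonneg _) (hx i)
  have hgz : HasSum (fun i => lam i * (g (x i) + 1)) (g z + 1) := by
    simpa [mul_add] using (g.hasSum hz).add hsum
  calc (1 + t) * ∑ i ∈ F, lam i - 1 ≤ ∑ i ∈ F, lam i * (g (x i) + 1) - 1 := by
        rw [Finset.mul_sum]
        refine sub_le_sub_right (Finset.sum_le_sum fun i hi => ?_) 1
        rw [mul_comm]
        exact mul_le_mul_of_nonneg_left (by linarith [ht i hi]) (hlam i)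
    _ ≤ g z + 1 - 1 := by
        gcongr
        exact sum_le_hasSum F (fun i _ => mul_nonneg (hlam i) (by linarith [hgx i])) hgz
    _ ≤ ‖z‖ := by
        rw [add_sub_cancel_right]
        exact (le_abs_self _).trans ((g.le_opNorm z).trans (by nlinarith [norm_nonneg z]))

end

theorem stmt_5 {X : Type*} [NormedAddCommGroup X] [NormedSpace ℝ X]
    (h : ∀ (n : ℕ) (f : Fin n → X →L[ℝ] ℝ) (ε : Fin n → ℝ),
      (∀ i, ‖f i‖ = 1) → (∀ i, ε i ∈ Set.Ioo (0 : ℝ) 1) →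
      ∀ lam ∈ Set.Ioo (0 : ℝ) 1,
        ∃ (x : Fin n → X) (g : X →L[ℝ] ℝ), ‖g‖ = 1 ∧
          ∀ i, x i ∈ ballSlice (f i) (ε i) ∧ g (x i) ≥ lam)
    (f : ℕ → X →L[ℝ] ℝ) (ε : ℕ → ℝ)
    (hf : ∀ i, ‖f i‖ = 1) (hε : ∀ i, ε i ∈ Set.Ioo (0 : ℝ) 1)
    (lam : ℕ → ℝ) (hlam : ∀ i, 0 ≤ lam i) (hsum : ∑' i, lam i = 1)
    (hsumm : Summable lam) :
    ∀ μ ∈ Set.Ioo (0 : ℝ) 1,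
      ∃ (x : ℕ → X) (z : X), (∀ i, x i ∈ ballSlice (f i) (ε i)) ∧
        HasSum (fun i => lam i • x i) z ∧ ‖z‖ > μ := by
  rintro μ ⟨hμ0, hμ1⟩
  have hlam_one : HasSum lam 1 := hsum ▸ hsumm.hasSum
  obtain ⟨t, hμt, ht1⟩ := exists_between hμ1
  obtain ⟨N, hN⟩ : ∃ N, 1 + μ < (1 + t) * ∑ i ∈ range N, lam i :=
    ((hlam_one.tendsto_sum_nat.const_mul (1 + t)).eventually
      (lt_mem_nhds (by linarith : 1 + μ < (1 + t) * 1))).exists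
  obtain ⟨x₀, g, hg, hx₀⟩ :=
    h N (fun i => f i) (fun i => ε i) (fun i => hf i) (fun i => hε i) t ⟨by linarith, by linarith⟩
  choose u hu using fun i => exists_closedBall_subset_ballSlice (hf i) (hε i).1 (hε i).2.le
  have hr : ∀ i, 0 < ε i / 4 := fun i => by linarith [(hε i).1]
  have hu_norm : ∀ i, ‖u i‖ ≤ 1 := fun i => (hu i (mem_closedBall_self (hr i).le)).1
  obtain ⟨y, hy, hy_sum⟩ := exists_mem_closedBall_summable_smul hlam
    (hsumm.of_nonneg_of_le (fun i => mul_nonneg (hlam i) (norm_nonneg _))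
      fun i => mul_le_of_le_one_right (hlam i) (hu_norm i)) hr
    (hsumm.of_nonneg_of_le (fun i => mul_nonneg (hlam i) (hr i).le)
      fun i => mul_le_of_le_one_right (hlam i) (by linarith [(hε i).2]))
  let x i := if hi : i < N then x₀ ⟨i, hi⟩ else y i
  have hx : ∀ i, x i ∈ ballSlice (f i) (ε i) := fun i => by
    by_cases hi : i < N
    · simpa [x, hi] using (hx₀ ⟨i, hi⟩).1
    · simpa [x, hi] using hu i (hy i)
  have hx_sum : Summable fun i => lam i • x i := by
    refine (summable_nat_add_iff N).1 (((summable_nat_add_iff N).2 hy_sum).congr fun i => ?_)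
    simp [x]
  refine ⟨x, _, hx, hx_sum.hasSum, ?_⟩
  have hz := one_add_mul_sum_sub_one_le_norm hg.le hlam hlam_one (fun i => (hx i).1) hx_sum.hasSum
    (range N) (t := t) fun i hi => by simpa [x, mem_range.1 hi] using (hx₀ ⟨i, mem_range.1 hi⟩).2
  linarith
end

section
/- Let X be a Banach space, A a subset of S_{X*}, and ε ∈ (0,1/2). Suppose there exists y* ∈ S_{X*} such that for every x* ∈ A there is x** ∈ S_{X**} with x**(x*) ≥ 1 − ε/2 and x**(y*) ≥ 1 − ε/2. Then for every x* ∈ A there exists x ∈ S_X with x*(x) > 1 − ε and y*(x) > 1 − ε. -/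
theorem stmt_7 {X : Type*} [NormedAddCommGroup X] [NormedSpace ℝ X]
    [CompleteSpace X]
    (A : Set (X →L[ℝ] ℝ)) (hA : ∀ f ∈ A, ‖f‖ = 1)
    (ε : ℝ) (hε : ε ∈ Set.Ioo (0 : ℝ) (1/2))
    (g : X →L[ℝ] ℝ) (hg : ‖g‖ = 1)
    (h : ∀ f ∈ A, ∃ F : (X →L[ℝ] ℝ) →L[ℝ] ℝ, ‖F‖ = 1 ∧
      F f ≥ 1 - ε / 2 ∧ F g ≥ 1 - ε / 2) :
    ∀ f ∈ A, ∃ x : X, ‖x‖ = 1 ∧ f x > 1 - ε ∧ g x > 1 - ε := by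
  obtain ⟨hε0, hε2⟩ := hε
  intro f hf
  obtain ⟨F, hF, hFf, hFg⟩ := h f hf
  have key : ∃ x : X, ‖x‖ ≤ 1 ∧ f x > 1 - ε ∧ g x > 1 - ε := by
    by_contra hc
    push_neg at hc
    set T : X →L[ℝ] (ℝ × ℝ) := f.prod g with hT
    have hdisj : Disjoint (Set.Ioi (1-ε) ×ˢ Set.Ioi (1-ε))
        (T '' Metric.closedBall 0 1) := by
      rw [Set.disjoint_left]
      rintro p ⟨hp1, hp2⟩ ⟨x, hx, rfl⟩
      rw [Metric.mem_closedBall, dist_zero_right] at hx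
      exact absurd (hc x hx hp1) (not_le.2 hp2)
    have hsconv : Convex ℝ (Set.Ioi (1-ε) ×ˢ Set.Ioi (1-ε)) :=
      (convex_Ioi _).prod (convex_Ioi _)
    have hsopen : IsOpen (Set.Ioi (1-ε) ×ˢ Set.Ioi (1-ε)) :=
      isOpen_Ioi.prod isOpen_Ioi
    have htconv : Convex ℝ (T '' Metric.closedBall 0 1) :=
      (convex_closedBall (0:X) 1).linear_image (T : X →ₗ[ℝ] ℝ × ℝ)
    obtain ⟨φ, u, hsu, htu⟩ := geometric_hahn_banach_open hsconv hsopen htconv hdisj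
    set lam := φ (1, 0) with hlam
    set mu := φ (0, 1) with hmu
    have hφ : ∀ p q : ℝ, φ (p, q) = p * lam + q * mu := by
      intro p q
      have : (p, q) = p • ((1:ℝ), (0:ℝ)) + q • ((0:ℝ), (1:ℝ)) := by
        simp [Prod.ext_iff]
      rw [this, map_add, map_smul, map_smul, smul_eq_mul, smul_eq_mul]
    set v : X →L[ℝ] ℝ := lam • f + mu • g with hv
    have hvx : ∀ x : X, v x = φ (T x) := by
      intro x
      simp [hv, hT, hφ, ContinuousLinearMap.prod_apply, mul_comm]
    have hub : ∀ x : X, ‖x‖ ≤ 1 → u ≤ v x := by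
      intro x hx
      rw [hvx]
      exact htu _ ⟨x, by simpa [Metric.mem_closedBall, dist_zero_right] using hx, rfl⟩
    have hu0 : u ≤ 0 := by simpa using hub 0 (by simp)
    have hnorm : ‖v‖ ≤ -u :=
      ContinuousLinearMap.opNorm_le_of_unit_norm (by linarith)
        (fun x hx => by
          have h1 := hub x hx.le
          have h2 := hub (-x) (by simp [hx])
          rw [map_neg] at h2
          rw [Real.norm_eq_abs, abs_le]
          constructor <;> linarith)
    have hFv : u ≤ F v := by
      have h1 : |F v| ≤ ‖v‖ := by
        calc |F v| ≤ ‖F‖ * ‖v‖ := F.le_opNorm v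
        _ = ‖v‖ := by rw [hF, one_mul]
      have := abs_le.1 h1
      linarith
    have hFv' : F v = F f * lam + F g * mu := by
      simp [hv, mul_comm]
    have hmem : (F f, F g) ∈ Set.Ioi (1-ε) ×ˢ Set.Ioi (1-ε) := by
      constructor
      · simp only [Set.mem_Ioi]; linarith
      · simp only [Set.mem_Ioi]; linarith
    have := hsu _ hmem
    rw [hφ] at this
    linarith [hFv, hFv']
  obtain ⟨x, hx1, hxf, hxg⟩ := key
  have hxpos : 0 < ‖x‖ := by
    rcases eq_or_ne x 0 with rfl | hne
    · simp at hxf; linarith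
    · exact norm_pos_iff.2 hne
  refine ⟨‖x‖⁻¹ • x, ?_, ?_, ?_⟩
  · rw [norm_smul, norm_inv, norm_norm, inv_mul_cancel₀ hxpos.ne']
  · rw [map_smul, smul_eq_mul]
    have h1 : (1:ℝ) ≤ ‖x‖⁻¹ := (one_le_inv₀ hxpos).2 hx1
    nlinarith
  · rw [map_smul, smul_eq_mul]
    have h1 : (1:ℝ) ≤ ‖x‖⁻¹ := (one_le_inv₀ hxpos).2 hx1
    nlinarith
end

section
/- Let X_1, X_2 be real normed spaces, (x_1*, x_2*) ∈ S_{X_1* ⊕_1 X_2*}, ε ∈ [0,1/2), and A a subset of the unit sphere of X_1 ⊕_∞ X_2 such that every (x_1, x_2) ∈ A satisfies (x_1*,x_2*)(x_1,x_2) ≥ 1 − ε. Then either x_1*(x_1) ≥ (1−2ε)‖x_1*‖‖x_1‖ for every (x_1,x_2) ∈ A, or x_2*(x_2) ≥ (1−2ε)‖x_2*‖‖x_2‖ for every (x_1,x_2) ∈ A. -/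
theorem stmt_9 {X₁ X₂ : Type*} [NormedAddCommGroup X₁] [NormedSpace ℝ X₁]
    [NormedAddCommGroup X₂] [NormedSpace ℝ X₂]
    (f₁ : X₁ →L[ℝ] ℝ) (f₂ : X₂ →L[ℝ] ℝ) (hf : ‖f₁‖ + ‖f₂‖ = 1)
    (ε : ℝ) (hε : ε ∈ Set.Ico (0 : ℝ) (1/2))
    (A : Set (X₁ × X₂)) (hA : ∀ x ∈ A, ‖x‖ = 1)
    (h : ∀ x ∈ A, f₁ x.1 + f₂ x.2 ≥ 1 - ε) :
    (∀ x ∈ A, f₁ x.1 ≥ (1 - 2*ε) * ‖f₁‖ * ‖x.1‖) ∨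
      (∀ x ∈ A, f₂ x.2 ≥ (1 - 2*ε) * ‖f₂‖ * ‖x.2‖) := by
  obtain ⟨hε0, hε2⟩ := hε
  rcases le_or_gt (1/2) ‖f₁‖ with h1 | h1
  · left
    intro x hx
    have hn := hA x hx
    have hle := h x hx
    have h2 : f₂ x.2 ≤ ‖f₂‖ * ‖x.2‖ :=
      le_trans (le_abs_self _) (f₂.le_opNorm x.2)
    have hx1 : ‖x.1‖ ≤ 1 := hn ▸ norm_fst_le x
    have hx2 : ‖x.2‖ ≤ 1 := hn ▸ norm_snd_le x
    have hf2 : (0:ℝ) ≤ ‖f₂‖ := norm_nonneg _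
    have hx1' : (0:ℝ) ≤ ‖x.1‖ := norm_nonneg _
    nlinarith [mul_le_of_le_one_right hf2 hx2,
      mul_le_of_le_one_right (mul_nonneg (by linarith : (0:ℝ) ≤ 1 - 2*ε) (norm_nonneg f₁)) hx1,
      mul_le_mul_of_nonneg_left h1 hε0]
  · right
    intro x hx
    have hn := hA x hx
    have hle := h x hx
    have h2 : f₁ x.1 ≤ ‖f₁‖ * ‖x.1‖ :=
      le_trans (le_abs_self _) (f₁.le_opNorm x.1)
    have hx1 : ‖x.1‖ ≤ 1 := hn ▸ norm_fst_le x
    have hx2 : ‖x.2‖ ≤ 1 := hn ▸ norm_snd_le x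
    have hf1 : (0:ℝ) ≤ ‖f₁‖ := norm_nonneg _
    have hx2' : (0:ℝ) ≤ ‖x.2‖ := norm_nonneg _
    have h2' : (1:ℝ)/2 ≤ ‖f₂‖ := by linarith
    nlinarith [mul_le_of_le_one_right hf1 hx1,
      mul_le_of_le_one_right (mul_nonneg (by linarith : (0:ℝ) ≤ 1 - 2*ε) (norm_nonneg f₂)) hx2,
      mul_le_mul_of_nonneg_left h2' hε0]
end

section
/- Let (X_η)_{η∈I} be an infinite family of nontrivial real normed spaces. Then the dual of the ℓ_1-sum ℓ_1(X_η) has the weak* 1-ASD2P with respect to the cardinality of ℓ_1(X_η): for every set A of norm-one elements of ℓ_1(X_η) there exist a set B ⊆ S_{ℓ_∞(X_η*)} and x** ∈ S_{(ℓ_∞(X_η*))*} such that B norms A (i.e., for every x ∈ A and every δ > 0 there is x* ∈ B with x*(x) > 1 − δ) and x**(x*) = 1 for every x* ∈ B. -/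
/-!
Fix unit vectors `e i ∈ X i` and norm-one functionals `g i` with `g i (e i) = 1`, and let `u i` be
`e i` placed in coordinate `i` of `ℓ_1(X_i)`. Take for `B` the norm-one functionals equal to `1` at
all but finitely many `u i`, and for `F` the limit of evaluation at `u i` along a free ultrafilter;
then `F = 1` on `B`. The set `B` contains every finite perturbation of `(g i)` of norm at most one,
and these already norm `ℓ_1(X_i)`.
-/

open Filter Topology
open scoped ENNReal

namespace lp

variable {ι 𝕜 : Type*} {X : ι → Type*} [NontriviallyNormedField 𝕜]
  [∀ i, NormedAddCommGroup (X i)] [∀ i, NormedSpace 𝕜 (X i)]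

theorem norm_eq_tsum_norm (x : lp X 1) : ‖x‖ = ∑' i, ‖x i‖ := by
  simpa using norm_eq_tsum_rpow (p := 1) (by norm_num) x

theorem summable_norm (x : lp X 1) : Summable fun i => ‖x i‖ := by
  simpa using (lp.memℓp x).summable (p := 1) (by norm_num)

theorem norm_apply_apply_le (f : lp (fun i => StrongDual 𝕜 (X i)) ∞) (x : ∀ i, X i) (i : ι) :
    ‖f i (x i)‖ ≤ ‖f‖ * ‖x i‖ :=
  (f i).le_of_opNorm_le (norm_apply_le_norm ENNReal.top_ne_zero f i) (x i)

theorem summable_norm_apply_apply (f : lp (fun i => StrongDual 𝕜 (X i)) ∞) (x : lp X 1) :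
    Summable fun i => ‖f i (x i)‖ :=
  .of_nonneg_of_le (fun _ => norm_nonneg _) (norm_apply_apply_le f x)
    ((summable_norm x).mul_left ‖f‖)

variable [CompleteSpace 𝕜]

theorem summable_apply_apply (f : lp (fun i => StrongDual 𝕜 (X i)) ∞) (x : lp X 1) :
    Summable fun i => f i (x i) :=
  .of_norm (summable_norm_apply_apply f x)

/-- The pairing of `ℓ_∞(X_i^*)` with `ℓ_1(X_i)`. -/
noncomputable def toDualOne (f : lp (fun i => StrongDual 𝕜 (X i)) ∞) : StrongDual 𝕜 (lp X 1) :=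
  LinearMap.mkContinuous
    { toFun x := ∑' i, f i (x i)
      map_add' x y := by
        simp only [coeFn_add, Pi.add_apply, map_add]
        exact (summable_apply_apply f x).tsum_add (summable_apply_apply f y)
      map_smul' c x := by
        simp only [coeFn_smul, Pi.smul_apply, map_smul, smul_eq_mul, RingHom.id_apply]
        exact tsum_mul_left }
    ‖f‖ fun x => calc
      ‖∑' i, f i (x i)‖ ≤ ∑' i, ‖f‖ * ‖x i‖ :=
        norm_tsum_le_tsum_norm (summable_norm_apply_apply f x) |>.trans <|
          (summable_norm_apply_apply f x).tsum_le_tsum (norm_apply_apply_le f x)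
            ((summable_norm x).mul_left _)
      _ = ‖f‖ * ‖x‖ := by rw [tsum_mul_left, norm_eq_tsum_norm]

theorem toDualOne_apply (f : lp (fun i => StrongDual 𝕜 (X i)) ∞) (x : lp X 1) :
    toDualOne f x = ∑' i, f i (x i) := rfl

theorem norm_toDualOne_le (f : lp (fun i => StrongDual 𝕜 (X i)) ∞) : ‖toDualOne f‖ ≤ ‖f‖ :=
  LinearMap.mkContinuous_norm_le _ (norm_nonneg f) _

theorem toDualOne_single [DecidableEq ι] (f : lp (fun i => StrongDual 𝕜 (X i)) ∞) (j : ι)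
    (v : X j) : toDualOne f (lp.single 1 j v) = f j v := by
  rw [toDualOne_apply, tsum_eq_single j fun i hij => by rw [lp.single_apply_ne _ _ _ hij, map_zero],
    lp.single_apply_self]

end lp

section UltrafilterLimit

variable {ι 𝕜 E : Type*} [NontriviallyNormedField 𝕜] [ProperSpace 𝕜]
  [NormedAddCommGroup E] [NormedSpace 𝕜 E] (U : Ultrafilter ι) {u : ι → E}

theorem StrongDual.exists_tendsto_apply (hu : ∀ i, ‖u i‖ ≤ 1) (h : StrongDual 𝕜 E) :
    ∃ a, Tendsto (fun i => h (u i)) U (𝓝 a) := by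
  have hball : ∀ i, h (u i) ∈ Metric.closedBall (0 : 𝕜) ‖h‖ := fun i =>
    mem_closedBall_zero_iff.2 (h.unit_le_opNorm _ (hu i))
  obtain ⟨a, -, ha⟩ := (isCompact_closedBall (0 : 𝕜) ‖h‖).ultrafilter_le_nhds
    (U.map fun i => h (u i)) (le_principal_iff.2 (mem_map.2 (univ_mem' hball)))
  exact ⟨a, ha⟩

variable (𝕜) in
/-- The functional `h ↦ lim_U h (u i)` on `E^*`: a weak* cluster point of the bounded family `u`
in the bidual. -/
noncomputable def weakStarLimUnder (hu : ∀ i, ‖u i‖ ≤ 1) : StrongDual 𝕜 (StrongDual 𝕜 E) :=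
  LinearMap.mkContinuous
    { toFun h := limUnder U fun i => h (u i)
      map_add' h₁ h₂ := tendsto_nhds_unique
        (tendsto_nhds_limUnder (StrongDual.exists_tendsto_apply U hu _))
        ((tendsto_nhds_limUnder (StrongDual.exists_tendsto_apply U hu h₁)).add
          (tendsto_nhds_limUnder (StrongDual.exists_tendsto_apply U hu h₂)))
      map_smul' c h := tendsto_nhds_unique
        (tendsto_nhds_limUnder (StrongDual.exists_tendsto_apply U hu _))
        ((tendsto_nhds_limUnder (StrongDual.exists_tendsto_apply U hu h)).const_mul c) }
    1 fun h => by
      rw [one_mul]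
      exact le_of_tendsto' (tendsto_nhds_limUnder (StrongDual.exists_tendsto_apply U hu h)).norm
        fun i => h.unit_le_opNorm _ (hu i)

theorem tendsto_weakStarLimUnder (hu : ∀ i, ‖u i‖ ≤ 1) (h : StrongDual 𝕜 E) :
    Tendsto (fun i => h (u i)) U (𝓝 (weakStarLimUnder 𝕜 U hu h)) :=
  tendsto_nhds_limUnder (StrongDual.exists_tendsto_apply U hu h)

theorem norm_weakStarLimUnder_le (hu : ∀ i, ‖u i‖ ≤ 1) : ‖weakStarLimUnder 𝕜 U hu‖ ≤ 1 :=
  LinearMap.mkContinuous_norm_le _ zero_le_one _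

theorem weakStarLimUnder_eq_of_eventually_eq (hu : ∀ i, ‖u i‖ ≤ 1) {h : StrongDual 𝕜 E} {c : 𝕜}
    (hc : ∀ᶠ i in U, h (u i) = c) : weakStarLimUnder 𝕜 U hu h = c :=
  tendsto_nhds_unique (tendsto_weakStarLimUnder U hu h) (tendsto_const_nhds.congr' (hc.mono
    fun _ hi => hi.symm))

end UltrafilterLimit

theorem ContinuousLinearMap.norm_eq_one_of_apply_eq_one {𝕜 E : Type*} [NontriviallyNormedField 𝕜]
    [NormedAddCommGroup E] [NormedSpace 𝕜 E] {h : StrongDual 𝕜 E} {v : E} (hh : ‖h‖ ≤ 1)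
    (hv : ‖v‖ ≤ 1) (hhv : h v = 1) : ‖h‖ = 1 :=
  le_antisymm hh (by simpa [hhv] using h.unit_le_opNorm v hv)

theorem exists_norm_eq_one_dual_apply_eq_one (E : Type*) [NormedAddCommGroup E] [NormedSpace ℝ E]
    [Nontrivial E] : ∃ (v : E) (φ : StrongDual ℝ E), ‖v‖ = 1 ∧ ‖φ‖ = 1 ∧ φ v = 1 := by
  obtain ⟨v, hv⟩ := exists_norm_eq E zero_le_one
  obtain ⟨φ, hφ, hφv⟩ := exists_dual_vector' ℝ v
  exact ⟨v, φ, hv, hφ, by rw [hφv, hv]; rfl⟩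

namespace lp

variable {ι : Type*} {X : ι → Type*} [∀ i, NormedAddCommGroup (X i)] [∀ i, NormedSpace ℝ (X i)]

/-- Take norming functionals of the `x i` on a finite set carrying almost all of the mass of `x`,
and `g` elsewhere. -/
theorem exists_eventually_eq_toDualOne_apply_gt (g : lp (fun i => StrongDual ℝ (X i)) ∞)
    (hg : ‖g‖ ≤ 1) (x : lp X 1) {δ : ℝ} (hδ : 0 < δ) :
    ∃ f : lp (fun i => StrongDual ℝ (X i)) ∞, ‖f‖ ≤ 1 ∧ (∀ᶠ i in cofinite, f i = g i) ∧
      ‖x‖ - δ < toDualOne f x := by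
  classical
  obtain ⟨S, hS⟩ : ∃ S : Finset ι, ‖x‖ - δ / 2 < ∑ i ∈ S, ‖x i‖ := by
    rw [norm_eq_tsum_norm]
    exact ((summable_norm x).hasSum.eventually (lt_mem_nhds (by linarith))).exists
  choose φ hφ hφx using fun i => exists_dual_vector'' ℝ (x i)
  let f' : ∀ i, StrongDual ℝ (X i) := fun i => if i ∈ S then φ i else g i
  have hf' : ∀ i, ‖f' i‖ ≤ 1 := fun i => by
    by_cases hi : i ∈ S
    · simpa [f', hi] using hφ i
    · simpa [f', hi] using (norm_apply_le_norm ENNReal.top_ne_zero g i).trans hg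
  let f : lp (fun i => StrongDual ℝ (X i)) ∞ :=
    ⟨f', memℓp_infty ⟨1, Set.forall_mem_range.2 hf'⟩⟩
  refine ⟨f, norm_le_of_forall_le zero_le_one hf',
    S.eventually_cofinite_notMem.mono fun i hi => if_neg hi, ?_⟩
  set T := ∑' i : ↑(↑S : Set ι)ᶜ, ‖x i‖
  have hxT : ‖x‖ = ∑ i ∈ S, ‖x i‖ + T := by
    rw [norm_eq_tsum_norm, (summable_norm x).sum_add_tsum_compl]
  have hfS : ∀ i ∈ S, f i (x i) = ‖x i‖ := fun i hi => by
    simp [f, f', hi, hφx]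
  have htail : -T ≤ ∑' i : ↑(↑S : Set ι)ᶜ, f i (x i) := by
    rw [← tsum_neg]
    refine Summable.tsum_le_tsum (fun i => ?_) ((summable_norm x).subtype _).neg
      ((summable_apply_apply f x).subtype _)
    have := (f' i).le_of_opNorm_le (hf' i) (x i)
    rw [one_mul, Real.norm_eq_abs] at this
    exact (abs_le.1 this).1
  have hT : 0 ≤ T := tsum_nonneg fun _ => norm_nonneg _
  calc ‖x‖ - δ < ∑ i ∈ S, ‖x i‖ - T := by linarith
    _ ≤ ∑ i ∈ S, f i (x i) + ∑' i : ↑(↑S : Set ι)ᶜ, f i (x i) := by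
        rw [Finset.sum_congr rfl hfS]; linarith
    _ = toDualOne f x := (summable_apply_apply f x).sum_add_tsum_compl

end lp

theorem stmt_10 {ι : Type*} [Infinite ι] (X : ι → Type*)
    [∀ i, NormedAddCommGroup (X i)] [∀ i, NormedSpace ℝ (X i)]
    [∀ i, Nontrivial (X i)]
    (A : Set (lp X 1)) (hA : ∀ x ∈ A, ‖x‖ = 1) :
    ∃ (B : Set (lp X 1 →L[ℝ] ℝ)) (F : (lp X 1 →L[ℝ] ℝ) →L[ℝ] ℝ),
      (∀ f ∈ B, ‖f‖ = 1) ∧ ‖F‖ = 1 ∧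
      (∀ x ∈ A, ∀ δ > (0 : ℝ), ∃ f ∈ B, f x > 1 - δ) ∧
      (∀ f ∈ B, F f = 1) := by
  classical
  choose e g he hg hge using fun i => exists_norm_eq_one_dual_apply_eq_one (X i)
  let y : lp (fun i => StrongDual ℝ (X i)) ∞ :=
    ⟨g, memℓp_infty ⟨1, Set.forall_mem_range.2 (hg · |>.le)⟩⟩
  have hy : ‖y‖ ≤ 1 := lp.norm_le_of_forall_le zero_le_one (hg · |>.le)
  let u i : lp X 1 := lp.single 1 i (e i)
  have hu i : ‖u i‖ = 1 := by rw [lp.norm_single (by norm_num), he]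
  let B := {h : StrongDual ℝ (lp X 1) | ‖h‖ = 1 ∧ ∀ᶠ i in cofinite, h (u i) = 1}
  have mem_B (f : lp (fun i => StrongDual ℝ (X i)) ∞) (hf : ‖f‖ ≤ 1)
      (hfy : ∀ᶠ i in cofinite, f i = g i) : lp.toDualOne f ∈ B := by
    have h1 : ∀ᶠ i in cofinite, lp.toDualOne f (u i) = 1 :=
      hfy.mono fun i hi => by rw [lp.toDualOne_single, hi, hge]
    obtain ⟨i, hi⟩ := h1.exists
    exact ⟨(lp.toDualOne f).norm_eq_one_of_apply_eq_one ((lp.norm_toDualOne_le f).trans hf)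
      (hu i).le hi, h1⟩
  have hyB : lp.toDualOne y ∈ B := mem_B y hy (.of_forall fun _ => rfl)
  let F := weakStarLimUnder ℝ (Ultrafilter.of cofinite) fun i => (hu i).le
  have hFB : ∀ h ∈ B, F h = 1 := fun h hh =>
    weakStarLimUnder_eq_of_eventually_eq _ _ (Ultrafilter.of_le cofinite hh.2)
  refine ⟨B, F, fun h hh => hh.1, F.norm_eq_one_of_apply_eq_one (norm_weakStarLimUnder_le _ _)
    hyB.1.le (hFB _ hyB), fun x hx δ hδ => ?_, hFB⟩
  obtain ⟨f, hf, hfy, hfx⟩ := lp.exists_eventually_eq_toDualOne_apply_gt y hy x hδ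
  exact ⟨_, mem_B f hf hfy, by rwa [hA x hx] at hfx⟩
end

section
/- Let (Ω, Σ, μ) be a measure space with μ atomless, and let (B_i)_{i∈ℕ} ⊆ Σ be a sequence of sets of positive measure. Then there exists a sequence (E_i)_{i∈ℕ} ⊆ Σ of pairwise disjoint sets of positive measure with E_i ⊆ B_i for every i. -/
/-!
Shrink each `B n` to a set `D n` of finite positive measure so small that
`μ (D (n + 1)) ≤ μ (D n) / 4`; atomlessness allows prescribing these measures exactly. Then the
union of all later sets has measure at most `μ (D i) / 2`, so `E i := D i \ ⋃ j > i, D j` keeps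
positive measure, and removing only the *later* sets already makes the `E i` pairwise disjoint.
-/
open MeasureTheory ENNReal

namespace ENNReal

theorem le_pow_mul_of_le_mul {a : ℕ → ℝ≥0∞} {r : ℝ≥0∞} (h : ∀ n, a (n + 1) ≤ r * a n)
    (n k : ℕ) : a (n + k) ≤ r ^ k * a n := by
  induction k with
  | zero => simp
  | succ k ih =>
    calc a (n + (k + 1)) ≤ r * a (n + k) := h (n + k)
      _ ≤ r * (r ^ k * a n) := by gcongr
      _ = r ^ (k + 1) * a n := by ring

theorem tsum_add_succ_lt_of_le_quarter_mul {a : ℕ → ℝ≥0∞} (h : ∀ n, a (n + 1) ≤ 4⁻¹ * a n)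
    {i : ℕ} (h0 : a i ≠ 0) (htop : a i ≠ ∞) : ∑' k, a (i + 1 + k) < a i := by
  have h_half : ∀ n, a (n + 1) ≤ 2⁻¹ * a n := fun n ↦
    (h n).trans (by gcongr; norm_num)
  calc ∑' k, a (i + 1 + k) ≤ ∑' k, 2⁻¹ ^ k * a (i + 1) :=
        ENNReal.tsum_le_tsum (le_pow_mul_of_le_mul h_half (i + 1))
    _ = 2 * a (i + 1) := by
        rw [ENNReal.tsum_mul_right, ENNReal.tsum_geometric, ENNReal.one_sub_inv_two, inv_inv]
    _ ≤ 2 * (4⁻¹ * a i) := by gcongr; exact h i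
    _ = a i / 2 := by
        rw [← mul_assoc, show (4 : ℝ≥0∞) = 2 * 2 by norm_num, ENNReal.mul_inv (by simp) (by simp),
          ← mul_assoc, ENNReal.mul_inv_cancel (by simp) (by simp), one_mul, ENNReal.div_eq_inv_mul]
    _ < a i := ENNReal.half_lt_self h0 htop

theorem exists_seq_pos_lt_le_quarter_mul {b : ℕ → ℝ≥0∞} (hb : ∀ n, 0 < b n) :
    ∃ c : ℕ → ℝ≥0∞, (∀ n, 0 < c n) ∧ (∀ n, c n < b n) ∧ (∀ n, c n ≠ ∞) ∧
      ∀ n, c (n + 1) ≤ 4⁻¹ * c n := by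
  choose t ht0 htb using fun n ↦ exists_between (hb n)
  let c : ℕ → ℝ≥0∞ := fun n ↦ Nat.rec (min 1 (t 0)) (fun n cn ↦ min (4⁻¹ * cn) (t (n + 1))) n
  have hc_pos : ∀ n, 0 < c n := by
    intro n
    induction n with
    | zero => exact lt_min one_pos (ht0 0)
    | succ n ih => exact lt_min (ENNReal.mul_pos (by simp) ih.ne') (ht0 (n + 1))
  have hc_top : ∀ n, c n ≠ ∞ := by
    intro n
    induction n with
    | zero => exact ((min_le_left _ _).trans_lt one_lt_top).ne
    | succ n ih => exact ne_top_of_le_ne_top (mul_ne_top (by simp) ih) (min_le_left _ _)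
  refine ⟨c, hc_pos, fun n ↦ ?_, hc_top, fun n ↦ min_le_left _ _⟩
  cases n <;> exact (min_le_right _ _).trans_lt (htb _)

end ENNReal

theorem pairwise_disjoint_diff_iUnion_add_succ {α : Type*} (D : ℕ → Set α) :
    Pairwise (Function.onFun Disjoint fun i ↦ D i \ ⋃ k, D (i + 1 + k)) := by
  refine (pairwise_disjoint_on _).2 fun i j hij ↦ ?_
  refine Set.disjoint_sdiff_left.mono_right (Set.sdiff_subset.trans ?_)
  obtain ⟨k, rfl⟩ := Nat.exists_eq_add_of_lt hij
  exact (Nat.add_right_comm i k 1).symm ▸ Set.subset_iUnion (fun k ↦ D (i + 1 + k)) k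

theorem measure_diff_iUnion_add_succ_pos {α : Type*} [MeasurableSpace α] {μ : Measure α}
    {D : ℕ → Set α} (hD : ∀ n, μ (D (n + 1)) ≤ 4⁻¹ * μ (D n)) {i : ℕ}
    (h0 : μ (D i) ≠ 0) (htop : μ (D i) ≠ ∞) : 0 < μ (D i \ ⋃ k, D (i + 1 + k)) := by
  have hU : μ (⋃ k, D (i + 1 + k)) < μ (D i) :=
    (measure_iUnion_le _).trans_lt (ENNReal.tsum_add_succ_lt_of_le_quarter_mul hD h0 htop)
  exact (tsub_pos_of_lt hU).trans_le le_measure_sdiff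

theorem stmt_11 {Ω : Type*} [MeasurableSpace Ω] (μ : Measure Ω)
    (hatomless : ∀ A : Set Ω, MeasurableSet A →
      ∀ c : ℝ≥0∞, 0 < c → c < μ A →
        ∃ B ⊆ A, MeasurableSet B ∧ μ B = c)
    (B : ℕ → Set Ω) (hB : ∀ i, MeasurableSet (B i))
    (hBpos : ∀ i, 0 < μ (B i)) :
    ∃ E : ℕ → Set Ω, (∀ i, MeasurableSet (E i)) ∧
      (∀ i, 0 < μ (E i)) ∧ Pairwise (Function.onFun Disjoint E) ∧
      ∀ i, E i ⊆ B i := by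
  obtain ⟨c, hc0, hcB, hctop, hc⟩ := ENNReal.exists_seq_pos_lt_le_quarter_mul hBpos
  choose D hDB hDm hDμ using fun n ↦ hatomless (B n) (hB n) (c n) (hc0 n) (hcB n)
  have hD : ∀ n, μ (D (n + 1)) ≤ 4⁻¹ * μ (D n) := by simpa only [hDμ] using hc
  refine ⟨fun i ↦ D i \ ⋃ k, D (i + 1 + k), fun i ↦ (hDm i).diff (.iUnion fun k ↦ hDm _),
    fun i ↦ measure_diff_iUnion_add_succ_pos hD ?_ ?_, pairwise_disjoint_diff_iUnion_add_succ D,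
    fun i ↦ Set.sdiff_subset.trans (hDB i)⟩
  · exact hDμ i ▸ (hc0 i).ne'
  · exact hDμ i ▸ hctop i
end

section
/- Let (Ω, Σ, μ) be an atomless measure space, X a Banach space, and (f_i)_{i∈ℕ} a sequence in the unit sphere of L_∞(μ; X). Then there exists a sequence (E_i)_{i∈ℕ} of pairwise disjoint measurable sets of positive measure such that f_i·χ_{E_i} has essential supremum norm 1 for each i, i.e., ess sup_{t ∈ E_i} ‖f_i(t)‖ = 1. -/
/-!
Fix thresholds `r n ↑ 1`. Since `‖f i‖_∞ = 1`, every level set `{‖f i‖ > r n}` has positive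
measure. Atomlessness shrinks these countably many sets `A k` to pairwise disjoint subsets of
positive measure: pick `D k ⊆ A k` of measure `δ k`, where `δ` decreases so fast that `δ k`
exceeds the sum of all later `δ j`, and keep `D k \ ⋃ j > k, D j`. The union over `n` of the
pieces belonging to `f i` is the set `E i`.
-/
open MeasureTheory ENNReal
open scoped NNReal

noncomputable def NNReal.shrinkingMinorant (b : ℕ → ℝ≥0) : ℕ → ℝ≥0
  | 0 => b 0
  | k + 1 => min (NNReal.shrinkingMinorant b k / 4) (b (k + 1))

namespace NNReal.shrinkingMinorant

variable {b : ℕ → ℝ≥0}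

theorem le (k : ℕ) : shrinkingMinorant b k ≤ b k := by
  cases k with
  | zero => exact le_rfl
  | succ k => exact min_le_right _ _

theorem pos (hb : ∀ k, 0 < b k) (k : ℕ) : 0 < shrinkingMinorant b k := by
  induction k with
  | zero => exact hb 0
  | succ k ih => exact lt_min (div_pos ih (by norm_num)) (hb _)

theorem two_mul_succ_lt (hb : ∀ k, 0 < b k) (k : ℕ) :
    2 * shrinkingMinorant b (k + 1) < shrinkingMinorant b k := by
  have hk := pos hb k
  calc 2 * shrinkingMinorant b (k + 1) ≤ 2 * (shrinkingMinorant b k / 4) :=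
        mul_le_mul_right (min_le_left _ _) 2
    _ < shrinkingMinorant b k := by
        rw [← NNReal.coe_lt_coe]; push_cast; linarith [NNReal.coe_pos.2 hk]

end NNReal.shrinkingMinorant

namespace ENNReal

theorem tsum_le_two_mul_of_two_mul_succ_le {δ : ℕ → ℝ≥0∞} (h : ∀ k, 2 * δ (k + 1) ≤ δ k)
    (k : ℕ) : ∑' j, δ (k + j) ≤ 2 * δ k := by
  have hgeom : ∀ j, δ (k + j) ≤ δ k * 2⁻¹ ^ j := by
    intro j
    induction j with
    | zero => simp
    | succ j ih =>
      calc δ (k + j + 1) ≤ δ (k + j) * 2⁻¹ := by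
            rw [← div_eq_mul_inv, ENNReal.le_div_iff_mul_le (by simp) (by simp), mul_comm]
            exact h _
        _ ≤ δ k * 2⁻¹ ^ (j + 1) := by
            rw [pow_succ, ← mul_assoc]
            gcongr
  calc ∑' j, δ (k + j) ≤ ∑' j, δ k * 2⁻¹ ^ j := ENNReal.tsum_le_tsum hgeom
    _ = 2 * δ k := by
      rw [ENNReal.tsum_mul_left, ENNReal.tsum_geometric, ENNReal.one_sub_inv_two, inv_inv,
        mul_comm]

theorem tsum_tail_lt_of_two_mul_succ_lt {δ : ℕ → ℝ≥0∞} (h : ∀ k, 2 * δ (k + 1) < δ k)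
    (k : ℕ) : ∑' j, δ (k + 1 + j) < δ k :=
  (tsum_le_two_mul_of_two_mul_succ_le (fun k => (h k).le) (k + 1)).trans_lt (h k)

theorem exists_pos_lt_tsum_tail_lt {a : ℕ → ℝ≥0∞} (ha : ∀ k, 0 < a k) :
    ∃ δ : ℕ → ℝ≥0∞, (∀ k, 0 < δ k) ∧ (∀ k, δ k < a k) ∧ ∀ k, ∑' j, δ (k + 1 + j) < δ k := by
  choose b hb_pos hb_lt using fun k => ENNReal.lt_iff_exists_nnreal_btwn.1 (ha k)
  have hb : ∀ k, 0 < b k := fun k => ENNReal.coe_pos.1 (hb_pos k)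
  refine ⟨fun k => NNReal.shrinkingMinorant b k, fun k => ?_, fun k => ?_, ?_⟩
  · exact ENNReal.coe_pos.2 (NNReal.shrinkingMinorant.pos hb k)
  · exact (ENNReal.coe_le_coe.2 (NNReal.shrinkingMinorant.le k)).trans_lt (hb_lt k)
  · refine tsum_tail_lt_of_two_mul_succ_lt fun k => ?_
    exact_mod_cast NNReal.shrinkingMinorant.two_mul_succ_lt hb k

end ENNReal

theorem pairwise_disjoint_diff_iUnion_tail {α : Type*} (D : ℕ → Set α) :
    Pairwise (Function.onFun Disjoint fun k => D k \ ⋃ j, D (k + 1 + j)) := by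
  refine (pairwise_disjoint_on _).2 fun i k hik => ?_
  refine Set.disjoint_of_subset_right Set.sdiff_subset (Set.disjoint_sdiff_left.mono_right ?_)
  exact Set.subset_iUnion_of_subset (k - (i + 1)) (by rw [Nat.add_sub_cancel' hik])

section Disjointification

variable {Ω : Type*} [MeasurableSpace Ω]

theorem measure_diff_iUnion_tail_pos (μ : Measure Ω) {D : ℕ → Set Ω} {k : ℕ}
    (h : ∑' j, μ (D (k + 1 + j)) < μ (D k)) : 0 < μ (D k \ ⋃ j, D (k + 1 + j)) :=
  calc 0 < μ (D k) - μ (⋃ j, D (k + 1 + j)) := tsub_pos_of_lt ((measure_iUnion_le _).trans_lt h)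
    _ ≤ _ := le_measure_sdiff

def HasIntermediateValues (μ : Measure Ω) : Prop :=
  ∀ A : Set Ω, MeasurableSet A → ∀ c : ℝ≥0∞, 0 < c → c < μ A → ∃ B ⊆ A, MeasurableSet B ∧ μ B = c

theorem exists_pairwise_disjoint_subsets_nat {μ : Measure Ω} (hμ : HasIntermediateValues μ)
    {A : ℕ → Set Ω} (hA : ∀ k, MeasurableSet (A k)) (hpos : ∀ k, 0 < μ (A k)) :
    ∃ B : ℕ → Set Ω, (∀ k, MeasurableSet (B k)) ∧ (∀ k, B k ⊆ A k) ∧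
      (∀ k, 0 < μ (B k)) ∧ Pairwise (Function.onFun Disjoint B) := by
  obtain ⟨δ, hδ_pos, hδ_lt, hδ_tail⟩ := ENNReal.exists_pos_lt_tsum_tail_lt hpos
  choose D hDA hD hμD using fun k => hμ (A k) (hA k) (δ k) (hδ_pos k) (hδ_lt k)
  refine ⟨fun k => D k \ ⋃ j, D (k + 1 + j), fun k => (hD k).diff (.iUnion fun j => hD _),
    fun k => Set.sdiff_subset.trans (hDA k), fun k => measure_diff_iUnion_tail_pos μ ?_,
    pairwise_disjoint_diff_iUnion_tail D⟩
  simpa only [hμD] using hδ_tail k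

theorem exists_pairwise_disjoint_subsets {ι : Type*} [Countable ι] {μ : Measure Ω}
    (hμ : HasIntermediateValues μ) {A : ι → Set Ω} (hA : ∀ i, MeasurableSet (A i))
    (hpos : ∀ i, 0 < μ (A i)) :
    ∃ B : ι → Set Ω, (∀ i, MeasurableSet (B i)) ∧ (∀ i, B i ⊆ A i) ∧
      (∀ i, 0 < μ (B i)) ∧ Pairwise (Function.onFun Disjoint B) := by
  cases isEmpty_or_nonempty ι
  · exact ⟨isEmptyElim, isEmptyElim, isEmptyElim, isEmptyElim, fun i => isEmptyElim i⟩
  obtain ⟨e, he⟩ := exists_surjective_nat ι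
  obtain ⟨B, hB, hBA, hBpos, hBdisj⟩ :=
    exists_pairwise_disjoint_subsets_nat hμ (fun k => hA (e k)) fun k => hpos (e k)
  refine ⟨fun i => B (Function.surjInv he i), fun i => hB _, fun i => ?_, fun i => hBpos _,
    fun i j hij => hBdisj ((Function.injective_surjInv he).ne hij)⟩
  simpa only [Function.surjInv_eq he] using hBA (Function.surjInv he i)

end Disjointification

section EssSup

variable {Ω ε : Type*} [MeasurableSpace Ω] {μ : Measure Ω} [ENorm ε]

theorem measure_lt_enorm_pos {g : Ω → ε} {c : ℝ≥0∞} (hc : c < eLpNormEssSup g μ) :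
    0 < μ {t | c < ‖g t‖ₑ} := by
  refine pos_iff_ne_zero.2 fun hnull => ?_
  refine (eLpNormEssSup_le_of_ae_enorm_bound ?_).not_gt hc
  simpa only [ae_iff, not_le] using hnull

theorem le_eLpNormEssSup_of_forall_le {g : Ω → ε} {c : ℝ≥0∞} {s : Set Ω} (hs : μ s ≠ 0)
    (hle : ∀ t ∈ s, c ≤ ‖g t‖ₑ) : c ≤ eLpNormEssSup g μ := by
  by_contra! hlt
  refine hs (measure_mono_null (fun t ht => ?_) (ae_iff.1 (ae_lt_of_essSup_lt hlt)))
  exact (hle t ht).not_gt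

end EssSup

theorem stmt_12_general {Ω : Type*} [MeasurableSpace Ω] (μ : Measure Ω)
    (hatomless : ∀ A : Set Ω, MeasurableSet A →
      ∀ c : ℝ≥0∞, 0 < c → c < μ A →
        ∃ B ⊆ A, MeasurableSet B ∧ μ B = c)
    {X : Type*} [NormedAddCommGroup X]
    (f : ℕ → Lp X ⊤ μ) (hf : ∀ i, ‖f i‖ = 1) :
    ∃ E : ℕ → Set Ω, (∀ i, MeasurableSet (E i)) ∧
      (∀ i, 0 < μ (E i)) ∧ Pairwise (Function.onFun Disjoint E) ∧
      ∀ i, eLpNorm (f i) ⊤ (μ.restrict (E i)) = 1 := by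
  have hnorm : ∀ i, eLpNormEssSup (f i) μ = 1 := fun i => by
    rw [← eLpNorm_exponent_top, ← ENNReal.toReal_eq_one_iff, ← Lp.norm_def, hf i]
  obtain ⟨r, -, hr, hr_lim⟩ := exists_seq_strictMono_tendsto' (zero_lt_one' ℝ≥0∞)
  obtain ⟨B, hB, hBA, hBpos, hBdisj⟩ := exists_pairwise_disjoint_subsets hatomless
    (A := fun p : ℕ × ℕ => {t | r p.2 < ‖f p.1 t‖ₑ})
    (fun p => measurableSet_lt measurable_const (Lp.stronglyMeasurable _).enorm)
    fun p => measure_lt_enorm_pos ((hnorm p.1).symm ▸ (hr p.2).2)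
  refine ⟨fun i => ⋃ n, B (i, n), fun i => .iUnion fun n => hB _,
    fun i => (hBpos (i, 0)).trans_le (measure_mono (Set.subset_iUnion (fun n => B (i, n)) 0)),
    fun i j hij => Set.disjoint_iUnion_left.2 fun m => Set.disjoint_iUnion_right.2 fun n =>
      hBdisj fun h => hij (congrArg Prod.fst h), fun i => ?_⟩
  rw [eLpNorm_exponent_top]
  refine le_antisymm (hnorm i ▸ eLpNormEssSup_mono_measure _ Measure.absolutelyContinuous_restrict)
    (le_of_tendsto' hr_lim fun n => le_eLpNormEssSup_of_forall_le (s := B (i, n)) ?_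
      fun t ht => (hBA (i, n) ht).le)
  exact (Measure.restrict_eq_self μ (Set.subset_iUnion _ n)).trans_ne (hBpos _).ne'

theorem stmt_12 {Ω : Type*} [MeasurableSpace Ω] (μ : Measure Ω)
    (hatomless : ∀ A : Set Ω, MeasurableSet A →
      ∀ c : ℝ≥0∞, 0 < c → c < μ A →
        ∃ B ⊆ A, MeasurableSet B ∧ μ B = c)
    {X : Type*} [NormedAddCommGroup X] [CompleteSpace X]
    (f : ℕ → Lp X ⊤ μ) (hf : ∀ i, ‖f i‖ = 1) :
    ∃ E : ℕ → Set Ω, (∀ i, MeasurableSet (E i)) ∧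
      (∀ i, 0 < μ (E i)) ∧ Pairwise (Function.onFun Disjoint E) ∧
      ∀ i, eLpNorm (f i) ⊤ (μ.restrict (E i)) = 1 :=
  stmt_12_general μ hatomless f hf
end

section
/- Let K be a compact Hausdorff space with |K| ≥ ω₁. Then for every countable family (μ_i)_{i∈ℕ} of norm-one regular signed Borel measures on K (elements of C(K)*), there exist a set B ⊆ S_{C(K)} and a point x ∈ K such that f(x) = 1 for every f ∈ B and B norms the family, i.e., for every i and every ε > 0 there is f ∈ B with μ_i(f) ≥ 1 − ε. -/
open Set Function

/-- The set of `δ`-atoms of a functional `μ` on `C(K, ℝ)`: points near which `μ` has local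
mass at least `δ`. -/
private def atomSet {K : Type*} [TopologicalSpace K] [CompactSpace K] (μ : C(K, ℝ) →L[ℝ] ℝ) (δ : ℝ) : Set K :=
  {x | ∀ U ∈ nhds x, ∃ g : C(K, ℝ), tsupport ⇑g ⊆ U ∧ ‖g‖ ≤ 1 ∧ δ ≤ μ g}

private lemma atomSet_finite {K : Type*} [TopologicalSpace K] [CompactSpace K] [T2Space K]
    (μ : C(K, ℝ) →L[ℝ] ℝ) {δ : ℝ} (hδ : 0 < δ) : (atomSet μ δ).Finite := by
  by_contra hfin
  have hS : (atomSet μ δ).Infinite := hfin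
  obtain ⟨m, hm⟩ := exists_nat_gt (‖μ‖ / δ)
  have hmδ : ‖μ‖ < m * δ := by
    rwa [div_lt_iff₀ hδ] at hm
  obtain ⟨t, hts, htf, htc⟩ := hS.exists_subset_ncard_eq m
  obtain ⟨U, hU, hUd⟩ := htf.t2_separation
  -- choose witnesses
  have hex : ∀ x ∈ t, ∃ g : C(K, ℝ), tsupport ⇑g ⊆ U x ∧ ‖g‖ ≤ 1 ∧ δ ≤ μ g := by
    intro x hx
    exact hts hx (U x) ((hU x).2.mem_nhds (hU x).1)
  choose! g hgsupp hgnorm hgval using hex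
  set T : Finset K := htf.toFinset with hT
  have hTmem : ∀ x, x ∈ T ↔ x ∈ t := fun x => htf.mem_toFinset
  set h : C(K, ℝ) := ∑ x ∈ T, g x with hh
  have hhnorm : ‖h‖ ≤ 1 := by
    rw [ContinuousMap.norm_le _ zero_le_one]
    intro y
    have happly : h y = ∑ x ∈ T, g x y := by
      simp [hh]
    by_cases hc : ∃ x0 ∈ T, g x0 y ≠ 0
    · obtain ⟨x0, hx0T, hx0⟩ := hc
      have hyU0 : y ∈ U x0 :=
        hgsupp x0 ((hTmem x0).mp hx0T) (subset_tsupport _ hx0)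
      have : h y = g x0 y := by
        rw [happly]
        refine Finset.sum_eq_single_of_mem x0 hx0T ?_
        intro b hbT hbne
        by_contra hb
        have hyUb : y ∈ U b := hgsupp b ((hTmem b).mp hbT) (subset_tsupport _ hb)
        exact (Set.disjoint_left.mp
          (hUd ((hTmem b).mp hbT) ((hTmem x0).mp hx0T) hbne) hyUb) hyU0
      rw [this]
      calc ‖g x0 y‖ ≤ ‖g x0‖ := (g x0).norm_coe_le_norm y
        _ ≤ 1 := hgnorm x0 ((hTmem x0).mp hx0T)
    · push_neg at hc
      have : h y = 0 := by
        rw [happly]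
        exact Finset.sum_eq_zero fun x hx => hc x hx
      simp [this]
  have hμh : (m : ℝ) * δ ≤ μ h := by
    have : μ h = ∑ x ∈ T, μ (g x) := by
      rw [hh, map_sum]
    rw [this]
    have hcard : T.card = m := by
      rw [hT, ← Set.ncard_eq_toFinset_card _ htf]
      exact htc
    calc (m : ℝ) * δ = T.card • δ := by
          rw [hcard, nsmul_eq_mul]
      _ ≤ ∑ x ∈ T, μ (g x) :=
          Finset.card_nsmul_le_sum T _ δ (fun x hx => hgval x ((hTmem x).mp hx))
  have hub : μ h ≤ ‖μ‖ := by
    calc μ h ≤ |μ h| := le_abs_self _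
      _ = ‖μ h‖ := (Real.norm_eq_abs _).symm
      _ ≤ ‖μ‖ * ‖h‖ := μ.le_opNorm h
      _ ≤ ‖μ‖ * 1 := by
          exact mul_le_mul_of_nonneg_left hhnorm (norm_nonneg μ)
      _ = ‖μ‖ := mul_one _
  linarith

theorem stmt_13 {K : Type*} [TopologicalSpace K] [CompactSpace K] [T2Space K]
    (hK : Cardinal.aleph 1 ≤ Cardinal.mk K)
    (μ : ℕ → C(K, ℝ) →L[ℝ] ℝ) (hμ : ∀ i, ‖μ i‖ = 1) :
    ∃ (B : Set C(K, ℝ)) (x : K),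
      (∀ f ∈ B, ‖f‖ = 1) ∧
      (∀ f ∈ B, f x = 1) ∧
      (∀ i, ∀ ε > (0 : ℝ), ∃ f ∈ B, μ i f ≥ 1 - ε) := by
  -- the set of all atoms (for positive and negative parts, via ±μ i)
  set Bad : Set K := ⋃ i : ℕ, ⋃ n : ℕ, atomSet (μ i) (1 / (n + 1)) ∪
      atomSet (-(μ i)) (1 / (n + 1)) with hBad
  have hpos : ∀ n : ℕ, (0 : ℝ) < 1 / (n + 1) := by
    intro n; positivity
  have hBadc : Bad.Countable := by
    refine Set.countable_iUnion fun i => Set.countable_iUnion fun n => ?_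
    exact ((atomSet_finite (μ i) (hpos n)).union (atomSet_finite (-(μ i)) (hpos n))).countable
  -- K is uncountable
  have hKuncount : ¬ (Set.univ : Set K).Countable := by
    intro hc
    rw [Set.countable_univ_iff] at hc
    have : Cardinal.mk K ≤ Cardinal.aleph0 := Cardinal.mk_le_aleph0
    have h1 : Cardinal.aleph 1 ≤ Cardinal.aleph0 := hK.trans this
    exact absurd h1 (not_le.mpr (by simpa using Cardinal.aleph0_lt_aleph_one))
  obtain ⟨x, hx⟩ : ∃ x : K, x ∉ Bad := by
    by_contra hall
    push_neg at hall
    exact hKuncount (hBadc.mono (fun y _ => hall y))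
  -- key property of x: small local mass for every μ i
  have hxkey : ∀ i : ℕ, ∀ n : ℕ, ∃ U ∈ nhds x,
      ∀ g : C(K, ℝ), tsupport ⇑g ⊆ U → ‖g‖ ≤ 1 → |μ i g| < 1 / (n + 1) := by
    intro i n
    have h1 : x ∉ atomSet (μ i) (1 / (n + 1)) := by
      intro hmem
      exact hx (Set.mem_iUnion.mpr ⟨i, Set.mem_iUnion.mpr ⟨n, Or.inl hmem⟩⟩)
    have h2 : x ∉ atomSet (-(μ i)) (1 / (n + 1)) := by
      intro hmem
      exact hx (Set.mem_iUnion.mpr ⟨i, Set.mem_iUnion.mpr ⟨n, Or.inr hmem⟩⟩)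
    simp only [atomSet, Set.mem_setOf_eq, not_forall] at h1 h2
    push_neg at h1 h2
    obtain ⟨U1, hU1, hU1p⟩ := h1
    obtain ⟨U2, hU2, hU2p⟩ := h2
    refine ⟨U1 ∩ U2, Filter.inter_mem hU1 hU2, fun g hsupp hnorm => ?_⟩
    have hp1 := hU1p g (hsupp.trans Set.inter_subset_left) hnorm
    have hp2 := hU2p g (hsupp.trans Set.inter_subset_right) hnorm
    rw [ContinuousLinearMap.neg_apply] at hp2
    rw [abs_lt]
    constructor <;> linarith
  refine ⟨{f : C(K, ℝ) | ‖f‖ = 1 ∧ f x = 1}, x, fun f hf => hf.1, fun f hf => hf.2, ?_⟩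
  intro i ε hε
  -- choose n with 1/(n+1) < ε/4
  obtain ⟨n, hn⟩ := exists_nat_one_div_lt (show (0 : ℝ) < ε / 4 by linarith)
  obtain ⟨U, hU, hUp⟩ := hxkey i n
  -- choose an almost norming function f1
  have hlt : (1 : ℝ) - ε / 2 < ‖μ i‖ := by rw [hμ i]; linarith
  obtain ⟨f1, hf1norm, hf1val⟩ := (μ i).exists_lt_apply_of_lt_opNorm hlt
  -- fix the sign
  have hsign : ∃ f0 : C(K, ℝ), ‖f0‖ ≤ 1 ∧ 1 - ε / 2 < μ i f0 := by
    rw [Real.norm_eq_abs] at hf1val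
    rcases abs_cases (μ i f1) with ⟨heq, _⟩ | ⟨heq, _⟩
    · exact ⟨f1, hf1norm.le, by linarith⟩
    · refine ⟨-f1, by rw [norm_neg]; exact hf1norm.le, ?_⟩
      rw [map_neg]; linarith
  obtain ⟨f0, hf0norm, hf0val⟩ := hsign
  -- Urysohn function at x supported in U
  obtain ⟨V, hVU, hVopen, hxV⟩ := mem_nhds_iff.mp hU
  obtain ⟨g, hgsupp, hgone, hgmem⟩ :=
    exists_tsupport_one_of_isOpen_isClosed hVopen
      (isClosed_closure.isCompact) (isClosed_singleton (x := x))
      (Set.singleton_subset_iff.mpr hxV)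
  have hgx : g x = 1 := hgone rfl
  have hg0 : ∀ y, 0 ≤ g y := fun y => (hgmem y).1
  have hg1 : ∀ y, g y ≤ 1 := fun y => (hgmem y).2
  -- the perturbed function
  set h : C(K, ℝ) := f0 + g * (1 - f0) with hh
  have happly : ∀ y, h y = f0 y + g y * (1 - f0 y) := by
    intro y; simp [hh]
  have hf0bd : ∀ y, |f0 y| ≤ 1 := by
    intro y
    have := (f0).norm_coe_le_norm y
    rw [Real.norm_eq_abs] at this
    linarith
  have hhx : h x = 1 := by rw [happly, hgx]; ring
  have hhle : ‖h‖ ≤ 1 := by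
    rw [ContinuousMap.norm_le _ zero_le_one]
    intro y
    rw [Real.norm_eq_abs, happly, abs_le]
    have := hf0bd y
    have h1 := hg0 y
    have h2 := hg1 y
    rw [abs_le] at this
    constructor <;> nlinarith [this.1, this.2]
  have hhnorm : ‖h‖ = 1 := by
    refine le_antisymm hhle ?_
    have := h.norm_coe_le_norm x
    rw [hhx, norm_one] at this
    exact this
  -- estimate the perturbation
  set p : C(K, ℝ) := g * (1 - f0) with hp
  have hpsupp : tsupport ⇑p ⊆ U := by
    refine subset_trans ?_ (hgsupp.trans hVU)
    refine closure_mono ?_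
    intro y hy
    simp only [Function.mem_support] at hy ⊢
    intro hgy
    exact hy (by simp [hp, hgy])
  have hpbd : ∀ y, |p y| ≤ 2 := by
    intro y
    have h1 := hg0 y
    have h2 := hg1 y
    have h3 := hf0bd y
    rw [abs_le] at h3
    have : p y = g y * (1 - f0 y) := by simp [hp]
    rw [this, abs_le]
    constructor <;> nlinarith [h3.1, h3.2]
  have hμp : |μ i p| < 2 * (1 / (n + 1)) := by
    have hkey := hUp ((1 / 2 : ℝ) • p) ?_ ?_
    · rw [map_smul, smul_eq_mul, abs_mul, abs_of_nonneg (by norm_num : (0:ℝ) ≤ 1/2)] at hkey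
      linarith
    · refine subset_trans (closure_mono ?_) hpsupp
      intro y hy
      simp only [Function.mem_support] at hy ⊢
      intro hpy
      exact hy (by simp [hpy])
    · rw [ContinuousMap.norm_le _ zero_le_one]
      intro y
      have : ((1 / 2 : ℝ) • p) y = (1 / 2 : ℝ) * p y := by simp
      rw [Real.norm_eq_abs, this, abs_mul, abs_of_nonneg (by norm_num : (0:ℝ) ≤ 1/2)]
      have := hpbd y
      linarith
  have hμh : μ i h = μ i f0 + μ i p := by
    rw [hh, map_add]
  refine ⟨h, ⟨hhnorm, hhx⟩, ?_⟩
  have habs := abs_lt.mp hμp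
  rw [ge_iff_le, hμh]
  linarith
end

section
/- Let X be a real normed space such that for every countable set A ⊆ S_{X*} there exist B ⊆ S_X and y ∈ S_X with: B norms A (for every x* ∈ A and ε > 0 there is x ∈ B with x*(x) ≥ 1 − ε) and ‖y + x‖ = ‖y − x‖ = 1 for every x ∈ B. Then X has the 1-ASD2P_ω: for every countable A ⊆ S_{X*} there exist B' ⊆ S_X and x* ∈ S_{X*} such that B' norms A and x*(x) = 1 for every x ∈ B'. -/
/-! If `‖y ± x‖ ≤ 1` for all `x ∈ B`, then any norm-one `g` with `g y = 1` vanishes on `B`, while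
every norm-one functional normed by `B` kills `y`. So the translate `y + B` still norms `A` and lies
in the face `{g = 1}` of the unit ball. -/

namespace ContinuousLinearMap

variable {E : Type*} [SeminormedAddCommGroup E] [NormedSpace ℝ E]

theorem abs_apply_le_one {f : E →L[ℝ] ℝ} (hf : ‖f‖ ≤ 1) {x : E} (hx : ‖x‖ ≤ 1) : |f x| ≤ 1 :=
  calc |f x| = ‖f x‖ := rfl
    _ ≤ 1 * ‖x‖ := f.le_of_opNorm_le hf x
    _ ≤ 1 := by rwa [one_mul]

theorem apply_eq_zero_of_apply_eq_one {f : E →L[ℝ] ℝ} (hf : ‖f‖ ≤ 1) {y x : E} (hfy : f y = 1)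
    (hadd : ‖y + x‖ ≤ 1) (hsub : ‖y - x‖ ≤ 1) : f x = 0 := by
  have h₁ := (abs_le.mp (abs_apply_le_one hf hadd)).2
  have h₂ := (abs_le.mp (abs_apply_le_one hf hsub)).2
  rw [map_add] at h₁
  rw [map_sub] at h₂
  linarith

theorem apply_eq_zero_of_norming {f : E →L[ℝ] ℝ} (hf : ‖f‖ ≤ 1) {B : Set E} {y : E}
    (hB : ∀ ε > (0 : ℝ), ∃ x ∈ B, 1 - ε ≤ f x) (hBy : ∀ x ∈ B, ‖y + x‖ ≤ 1 ∧ ‖y - x‖ ≤ 1) :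
    f y = 0 := by
  have hclose : ∀ ε > (0 : ℝ), |f y| ≤ ε := by
    intro ε hε
    obtain ⟨x, hx, hfx⟩ := hB ε hε
    have h₁ := (abs_le.mp (abs_apply_le_one hf (hBy x hx).1)).2
    have h₂ := (abs_le.mp (abs_apply_le_one hf (hBy x hx).2)).1
    rw [map_add] at h₁
    rw [map_sub] at h₂
    exact abs_le.mpr ⟨by linarith, by linarith⟩
  exact abs_eq_zero.mp <| le_antisymm
    (le_of_forall_pos_le_add fun ε hε => by simpa using hclose ε hε) (abs_nonneg _)

end ContinuousLinearMap

open ContinuousLinearMap in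
theorem stmt_17 {X : Type*} [NormedAddCommGroup X] [NormedSpace ℝ X]
    (h : ∀ A : Set (X →L[ℝ] ℝ), A.Countable → (∀ f ∈ A, ‖f‖ = 1) →
      ∃ (B : Set X) (y : X), (∀ x ∈ B, ‖x‖ = 1) ∧ ‖y‖ = 1 ∧
        (∀ f ∈ A, ∀ ε > (0 : ℝ), ∃ x ∈ B, f x ≥ 1 - ε) ∧
        (∀ x ∈ B, ‖y + x‖ = 1 ∧ ‖y - x‖ = 1)) :
    ∀ A : Set (X →L[ℝ] ℝ), A.Countable → (∀ f ∈ A, ‖f‖ = 1) →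
      ∃ (B' : Set X) (g : X →L[ℝ] ℝ), (∀ x ∈ B', ‖x‖ = 1) ∧ ‖g‖ = 1 ∧
        (∀ f ∈ A, ∀ ε > (0 : ℝ), ∃ x ∈ B', f x ≥ 1 - ε) ∧
        (∀ x ∈ B', g x = 1) := by
  intro A hAc hA1
  obtain ⟨B, y, -, hy, hBA, hBy⟩ := h A hAc hA1
  have hBy' : ∀ x ∈ B, ‖y + x‖ ≤ 1 ∧ ‖y - x‖ ≤ 1 := fun x hx =>
    ⟨(hBy x hx).1.le, (hBy x hx).2.le⟩
  obtain ⟨g, hg, hgy⟩ := exists_dual_vector ℝ y (by rw [hy]; exact one_ne_zero)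
  replace hgy : g y = 1 := by rw [hgy, hy]; rfl
  have hgB : ∀ x ∈ B, g x = 0 := fun x hx =>
    apply_eq_zero_of_apply_eq_one hg.le hgy (hBy' x hx).1 (hBy' x hx).2
  have hAy : ∀ f ∈ A, f y = 0 := fun f hf =>
    apply_eq_zero_of_norming (hA1 f hf).le (hBA f hf) hBy'
  refine ⟨(y + ·) '' B, g, ?_, hg, ?_, ?_⟩
  · rintro _ ⟨x, hx, rfl⟩
    exact (hBy x hx).1
  · intro f hf ε hε
    obtain ⟨x, hx, hfx⟩ := hBA f hf ε hε
    exact ⟨y + x, ⟨x, hx, rfl⟩, by rwa [map_add, hAy f hf, zero_add]⟩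
  · rintro _ ⟨x, hx, rfl⟩
    rw [map_add, hgB x hx, add_zero, hgy]
end

section
/- Let κ ≥ ω₁. The space c_0(κ) of functions x : κ → ℝ vanishing at infinity (with sup norm) has the 1-ASD2P_{<κ}: for every set A of norm-one elements of c_0(κ)* = ℓ_1(κ) with |A| < κ, there exist B ⊆ S_{c_0(κ)} and x* ∈ S_{ℓ_1(κ)} such that B norms A and x*(x) = 1 for every x ∈ B. -/
open ZeroAtInfty
open Filter Set

section Stmt18Aux
variable {ι : Type} [TopologicalSpace ι] [DiscreteTopology ι]

open scoped Classical in
noncomputable def ee (α : ι) : C₀(ι, ℝ) :=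
  { toFun := fun β => if β = α then 1 else 0
    continuous_toFun := continuous_of_discreteTopology
    zero_at_infty' := by
      rw [cocompact_eq_cofinite]
      refine Tendsto.congr' ?_ tendsto_const_nhds
      rw [Filter.eventuallyEq_iff_exists_mem]
      exact ⟨{α}ᶜ, by simp [Set.finite_singleton α],
        fun β hβ => by
          simp only [Set.mem_compl_iff, Set.mem_singleton_iff] at hβ; simp [hβ]⟩ }

open scoped Classical in
lemma ee_apply (α β : ι) : ee α β = if β = α then 1 else 0 := rfl

lemma ee_self (α : ι) : ee α α = 1 := by simp [ee_apply]

lemma abs_le_norm (x : C₀(ι, ℝ)) (β : ι) : |x β| ≤ ‖x‖ := by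
  rw [← ZeroAtInftyContinuousMap.norm_toBCF_eq_norm]
  exact x.toBCF.norm_coe_le_norm β

lemma norm_le_of (x : C₀(ι, ℝ)) {C : ℝ} (hC : 0 ≤ C) (h : ∀ β, |x β| ≤ C) : ‖x‖ ≤ C := by
  rw [← ZeroAtInftyContinuousMap.norm_toBCF_eq_norm]
  exact (BoundedContinuousFunction.norm_le hC).mpr h

open scoped Classical in
lemma sum_ee_apply (T : Finset ι) (β : ι) :
    ((∑ α ∈ T, ee α : C₀(ι, ℝ)) : ι → ℝ) β = if β ∈ T then 1 else 0 := by
  classical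
  induction T using Finset.induction with
  | empty => simp
  | @insert a s ha ih =>
    rw [Finset.sum_insert ha]
    simp only [ZeroAtInftyContinuousMap.coe_add, Pi.add_apply, ih, ee_apply,
      Finset.mem_insert]
    by_cases h1 : β = a <;> by_cases h2 : β ∈ s <;> simp_all

lemma finite_neg (f : C₀(ι, ℝ) →L[ℝ] ℝ) (hf : ‖f‖ = 1) {δ : ℝ} (hδ : 0 < δ) :
    {α : ι | f (ee α) ≤ -δ}.Finite := by
  classical
  by_contra h
  have hinf : {α : ι | f (ee α) ≤ -δ}.Infinite := h
  obtain ⟨T, hT, hTcard⟩ := hinf.exists_subset_card_eq (⌈1/δ⌉₊ + 1)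
  set x : C₀(ι, ℝ) := -(∑ α ∈ T, ee α) with hx
  have hxnorm : ‖x‖ ≤ 1 := by
    refine norm_le_of _ one_pos.le fun β => ?_
    have : (x : ι → ℝ) β = -(if β ∈ T then 1 else 0) := by
      simp [hx, sum_ee_apply]
    rw [this]
    split <;> simp
  have h1 : f x ≤ 1 := by
    calc f x ≤ |f x| := le_abs_self _
    _ ≤ ‖f‖ * ‖x‖ := f.le_opNorm x
    _ ≤ 1 := by rw [hf]; simpa using hxnorm
  have h2 : (T.card : ℝ) * δ ≤ f x := by
    have : f x = ∑ α ∈ T, (-(f (ee α))) := by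
      simp [hx, map_neg, map_sum, Finset.sum_neg_distrib]
    rw [this]
    have := Finset.card_nsmul_le_sum T (fun α => -(f (ee α))) δ
      (fun α hα => by show δ ≤ -f (ee α); have := hT hα; simp only [Set.mem_setOf_eq] at this; linarith)
    simpa [nsmul_eq_mul] using this
  have h3 : (1:ℝ) < (T.card : ℝ) * δ := by
    rw [hTcard]
    push_cast
    have h4 : (1/δ) < (⌈1/δ⌉₊ : ℝ) + 1 := lt_of_le_of_lt (Nat.le_ceil _) (by linarith)
    calc (1:ℝ) = (1/δ) * δ := by field_simp
    _ < ((⌈1/δ⌉₊ : ℝ) + 1) * δ := by apply mul_lt_mul_of_pos_right h4 hδ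
  linarith

lemma countable_neg (f : C₀(ι, ℝ) →L[ℝ] ℝ) (hf : ‖f‖ = 1) :
    {α : ι | f (ee α) < 0}.Countable := by
  have : {α : ι | f (ee α) < 0} = ⋃ n : ℕ, {α : ι | f (ee α) ≤ -(1/(n+1))} := by
    ext α
    simp only [Set.mem_setOf_eq, Set.mem_iUnion]
    constructor
    · intro hα
      obtain ⟨n, hn⟩ := exists_nat_one_div_lt (show (0:ℝ) < -(f (ee α)) by linarith)
      exact ⟨n, by push_cast at hn ⊢; linarith⟩
    · rintro ⟨n, hn⟩
      have : (0:ℝ) < 1/((n:ℝ)+1) := by positivity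
      linarith
  rw [this]
  exact Set.countable_iUnion fun n =>
    (finite_neg f hf (by positivity : (0:ℝ) < 1/((n:ℝ)+1))).countable

noncomputable def ev (η : ι) : C₀(ι, ℝ) →L[ℝ] ℝ :=
  LinearMap.mkContinuous
    { toFun := fun x => x η
      map_add' := fun x y => by simp
      map_smul' := fun c x => by simp }
    1 (fun x => by simpa using abs_le_norm x η)

lemma ev_apply (η : ι) (x : C₀(ι, ℝ)) : ev η x = x η := rfl

lemma ev_norm (η : ι) : ‖ev η‖ = 1 := by
  refine le_antisymm (LinearMap.mkContinuous_norm_le _ one_pos.le _) ?_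
  have h1 : ‖ee η‖ ≤ 1 := by
    refine norm_le_of _ one_pos.le fun β => ?_
    classical
    rw [ee_apply]; split <;> simp
  have := (ev η).unit_le_opNorm (ee η) h1
  rw [ev_apply, ee_self] at this
  simpa using this

lemma exists_almost_norming (f : C₀(ι, ℝ) →L[ℝ] ℝ) (hf : ‖f‖ = 1) {c : ℝ} (hc : c < 1) :
    ∃ x : C₀(ι, ℝ), ‖x‖ ≤ 1 ∧ c ≤ f x := by
  rcases le_or_gt c 0 with h | h
  · exact ⟨0, by simp, by simpa using h⟩
  · by_cases hex : ∃ z : C₀(ι, ℝ), c * ‖z‖ < ‖f z‖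
    · obtain ⟨z, hz⟩ := hex
      have hz0 : z ≠ 0 := by rintro rfl; simp at hz
      have hzn : (0:ℝ) < ‖z‖ := norm_pos_iff.mpr hz0
      set s : ℝ := if 0 ≤ f z then 1 else -1 with hs
      have habs : |s| = 1 := by rw [hs]; split <;> simp
      refine ⟨(s / ‖z‖) • z, ?_, ?_⟩
      · refine norm_le_of _ one_pos.le fun β => ?_
        have h1 : ((s / ‖z‖) • z : C₀(ι, ℝ)) β = (s / ‖z‖) * z β := rfl
        rw [h1, abs_mul, abs_div, habs, abs_of_pos hzn]
        have h2 : |z β| ≤ ‖z‖ := abs_le_norm z β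
        rw [div_mul_eq_mul_div, one_mul, div_le_one hzn]
        exact h2
      · rw [map_smul, smul_eq_mul]
        have hsf : s * f z = |f z| := by
          rw [hs]; split <;> rename_i hsplit
          · rw [abs_of_nonneg hsplit]; ring
          · rw [abs_of_neg (lt_of_not_ge hsplit)]; ring
        have : s / ‖z‖ * f z = |f z| / ‖z‖ := by
          rw [← hsf]; ring
        rw [this]
        rw [le_div_iff₀ hzn]
        calc c * ‖z‖ ≤ ‖f z‖ := hz.le
        _ = |f z| := rfl
      
    · exfalso
      push_neg at hex
      have : ‖f‖ ≤ c := f.opNorm_le_bound h.le (fun z => hex z)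
      linarith


end Stmt18Aux

theorem stmt_18 {ι : Type} [TopologicalSpace ι] [DiscreteTopology ι]
    (hκ : Cardinal.aleph 1 ≤ Cardinal.mk ι)
    (A : Set (C₀(ι, ℝ) →L[ℝ] ℝ)) (hA : ∀ f ∈ A, ‖f‖ = 1)
    (hcard : Cardinal.mk A < Cardinal.mk ι) :
    ∃ (B : Set C₀(ι, ℝ)) (g : C₀(ι, ℝ) →L[ℝ] ℝ),
      (∀ x ∈ B, ‖x‖ = 1) ∧ ‖g‖ = 1 ∧
      (∀ f ∈ A, ∀ ε > (0 : ℝ), ∃ x ∈ B, f x ≥ 1 - ε) ∧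
      (∀ x ∈ B, g x = 1) := by
  classical
  set U : Set ι := ⋃ f ∈ A, {α : ι | f (ee α) < 0} with hUdef
  have haleph0_le : Cardinal.aleph0 ≤ Cardinal.mk ι :=
    le_trans (Cardinal.aleph0_le_aleph 1) hκ
  have haleph0_lt : Cardinal.aleph0 < Cardinal.mk ι :=
    lt_of_lt_of_le Cardinal.aleph0_lt_aleph_one hκ
  have hUcard : Cardinal.mk U < Cardinal.mk ι := by
    have h1 := Cardinal.mk_biUnion_le (fun f : C₀(ι, ℝ) →L[ℝ] ℝ => {α : ι | f (ee α) < 0}) A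
    have h2 : (⨆ f : A, Cardinal.mk {α : ι | (f : C₀(ι, ℝ) →L[ℝ] ℝ) (ee α) < 0})
        ≤ Cardinal.aleph0 := by
      refine ciSup_le' fun f => ?_
      rw [Cardinal.mk_le_aleph0_iff, Set.countable_coe_iff]
      exact countable_neg (f : C₀(ι, ℝ) →L[ℝ] ℝ) (hA f f.2)
    calc Cardinal.mk U ≤ Cardinal.mk A * ⨆ f : A,
          Cardinal.mk {α : ι | (f : C₀(ι, ℝ) →L[ℝ] ℝ) (ee α) < 0} := h1
    _ ≤ Cardinal.mk A * Cardinal.aleph0 := mul_le_mul_right h2 _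
    _ < Cardinal.mk ι := Cardinal.mul_lt_of_lt haleph0_le hcard haleph0_lt
  obtain ⟨η, hη⟩ : ∃ η : ι, η ∉ U := by
    by_contra hc
    push_neg at hc
    have hU : U = Set.univ := Set.eq_univ_of_forall hc
    rw [hU, Cardinal.mk_univ] at hUcard
    exact lt_irrefl _ hUcard
  have hfη : ∀ f ∈ A, 0 ≤ f (ee η) := by
    intro f hf
    by_contra hneg
    exact hη (Set.mem_biUnion hf (by simpa using lt_of_not_ge hneg))
  refine ⟨{x : C₀(ι, ℝ) | ‖x‖ = 1 ∧ x η = 1}, ev η, fun x hx => hx.1, ev_norm η, ?_,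
    fun x hx => hx.2⟩
  intro f hf ε hε
  obtain ⟨x, hx1, hx2⟩ := exists_almost_norming f (hA f hf) (c := 1 - ε) (by linarith)
  have hxη : x η ≤ 1 := le_trans (le_abs_self _) (le_trans (abs_le_norm x η) hx1)
  set y : C₀(ι, ℝ) := x + (1 - x η) • ee η with hy
  have hyβ : ∀ β : ι, (y : ι → ℝ) β = x β + (1 - x η) * (if β = η then 1 else 0) := by
    intro β; rfl
  have hyη : y η = 1 := by rw [hyβ]; simp
  have hynorm : ‖y‖ = 1 := by
    refine le_antisymm (norm_le_of _ one_pos.le fun β => ?_) ?_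
    · rw [hyβ]
      by_cases hb : β = η
      · simp [hb]
      · simp only [hb, if_false, mul_zero, add_zero]
        exact le_trans (abs_le_norm x β) hx1
    · calc (1:ℝ) = |y η| := by rw [hyη]; simp
      _ ≤ ‖y‖ := abs_le_norm y η
  refine ⟨y, ⟨hynorm, hyη⟩, ?_⟩
  have hfy : f y = f x + (1 - x η) * f (ee η) := by
    rw [hy]; simp [map_add, map_smul, smul_eq_mul]
  have : 0 ≤ (1 - x η) * f (ee η) :=
    mul_nonneg (by linarith) (hfη f hf)
  rw [ge_iff_le, hfy]
  linarith
end

section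
/- Let X be a real normed space and suppose that every countable set A ⊆ S_X satisfies: for every ε > 0 there is y ∈ S_X with ‖x + y‖ ≥ 2 − ε for all x ∈ A (i.e., X is ω-octahedral in the sequential sense). Then for every separable subspace Y ⊆ X and every ε > 0 there exists x ∈ S_X such that ‖y + λx‖ ≥ (1 − ε)(‖y‖ + |λ|) for all y ∈ Y and λ ∈ ℝ. -/
/-!
Apply the hypothesis to the normalized points of a countable dense subset of `Y` and to their
negatives. For `‖u‖, ‖x‖ ≤ 1` with `‖u + x‖ ≥ 2 - ε` and `s ≥ t ≥ 0`, the identity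
`s • (u + x) = (s • u + t • x) + (s - t) • x` gives
`‖s • u + t • x‖ ≥ s (2 - ε) - (s - t) ≥ (1 - ε) (s + t)`; using `-u` in place of `u` covers
`λ < 0`. The inequality is closed in `y`, so it passes from the dense subset to `Y`.
-/

lemma one_sub_mul_add_le_norm_smul_add_smul {E : Type*} [SeminormedAddCommGroup E]
    [NormedSpace ℝ E] {u x : E} {ε s t : ℝ} (hu : ‖u‖ ≤ 1)
    (hx : ‖x‖ ≤ 1) (hux : 2 - ε ≤ ‖u + x‖) (hs : 0 ≤ s) (ht : 0 ≤ t) :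
    (1 - ε) * (s + t) ≤ ‖s • u + t • x‖ := by
  wlog hts : t ≤ s generalizing u x s t
  · have := this hx hu (by rwa [add_comm]) ht hs (le_of_not_ge hts)
    rwa [add_comm t, add_comm (t • x)] at this
  have hε : 0 ≤ ε := by linarith [norm_add_le u x]
  have key : s * (2 - ε) ≤ ‖s • u + t • x‖ + (s - t) :=
    calc s * (2 - ε) ≤ s * ‖u + x‖ := mul_le_mul_of_nonneg_left hux hs
      _ = ‖s • (u + x)‖ := by rw [norm_smul, Real.norm_of_nonneg hs]
      _ = ‖(s • u + t • x) + (s - t) • x‖ := by congr 1; module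
      _ ≤ ‖s • u + t • x‖ + (s - t) * ‖x‖ := by
        grw [norm_add_le, norm_smul, Real.norm_of_nonneg (sub_nonneg.2 hts)]
      _ ≤ ‖s • u + t • x‖ + (s - t) := by
        grw [mul_le_of_le_one_right (sub_nonneg.2 hts) hx]
  nlinarith

lemma one_sub_mul_norm_add_abs_le_norm_add_smul {E : Type*} [NormedAddCommGroup E]
    [NormedSpace ℝ E] {a x : E} {ε : ℝ} (hx : ‖x‖ = 1)
    (hε : 0 ≤ ε) (hpos : a ≠ 0 → 2 - ε ≤ ‖NormedSpace.normalize a + x‖)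
    (hneg : a ≠ 0 → 2 - ε ≤ ‖-NormedSpace.normalize a + x‖) (lam : ℝ) :
    (1 - ε) * (‖a‖ + |lam|) ≤ ‖a + lam • x‖ := by
  rcases eq_or_ne a 0 with rfl | ha
  · simp only [norm_zero, zero_add, norm_smul, hx, Real.norm_eq_abs, mul_one]
    nlinarith [abs_nonneg lam]
  have hu : ‖NormedSpace.normalize a‖ ≤ 1 := (NormedSpace.norm_normalize ha).le
  rcases le_or_gt 0 lam with hlam | hlam
  · simpa [abs_of_nonneg hlam] using
      one_sub_mul_add_le_norm_smul_add_smul hu hx.le (hpos ha) (norm_nonneg a) hlam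
  · have := one_sub_mul_add_le_norm_smul_add_smul (by rwa [norm_neg]) hx.le (hneg ha)
      (norm_nonneg a) (neg_nonneg.2 hlam.le)
    rwa [smul_neg, NormedSpace.norm_smul_normalize, neg_smul, ← neg_add, norm_neg,
      ← abs_of_neg hlam] at this

theorem stmt_19 {X : Type*} [NormedAddCommGroup X] [NormedSpace ℝ X]
    (h : ∀ A : Set X, A.Countable → (∀ x ∈ A, ‖x‖ = 1) →
      ∀ ε > (0 : ℝ), ∃ y : X, ‖y‖ = 1 ∧ ∀ x ∈ A, ‖x + y‖ ≥ 2 - ε) :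
    ∀ Y : Submodule ℝ X, TopologicalSpace.IsSeparable (Y : Set X) →
      ∀ ε > (0 : ℝ), ∃ x : X, ‖x‖ = 1 ∧
        ∀ y ∈ Y, ∀ lam : ℝ, ‖y + lam • x‖ ≥ (1 - ε) * (‖y‖ + |lam|) := by
  rintro Y ⟨c, hc, hYc⟩ ε hε
  have hc' : (c \ {0}).Countable := hc.mono Set.sdiff_subset
  set A := NormedSpace.normalize '' (c \ {0}) ∪
    (fun a ↦ -NormedSpace.normalize a) '' (c \ {0})
  have hA_unit : ∀ u ∈ A, ‖u‖ = 1 := by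
    rintro _ (⟨a, ha, rfl⟩ | ⟨a, ha, rfl⟩) <;> simpa using ha.2
  obtain ⟨x, hx, hxA⟩ := h A ((hc'.image _).union (hc'.image _)) hA_unit ε hε
  refine ⟨x, hx, fun y hy lam ↦ ?_⟩
  have hc_bound : c ⊆ {a | (1 - ε) * (‖a‖ + |lam|) ≤ ‖a + lam • x‖} := fun a ha ↦
    one_sub_mul_norm_add_abs_le_norm_add_smul hx hε.le
      (fun ha0 ↦ hxA _ (.inl ⟨a, ⟨ha, ha0⟩, rfl⟩))
      (fun ha0 ↦ hxA _ (.inr ⟨a, ⟨ha, ha0⟩, rfl⟩)) lam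
  exact closure_minimal hc_bound (isClosed_le (by fun_prop) (by fun_prop)) (hYc hy)
end
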